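/- arXiv:1006.3883 — 6 statements merged into one kernel-verified Lean document; each statement's English description precedes it below -/
import Mathlib

section
/- For positive integers m, n, i, j with 1 ≤ i ≤ m and 1 ≤ j ≤ n, the number of pairs of non-intersecting monotone lattice paths in an m×n grid, the first from (1,1) to (i,n) and the second from (2,1) to (m,j), equals the determinant of the 2×2 matrix with entries [C(i+n-2, i-1), C(m+j-2, m-1); C(i+n-3, i-2), C(m+j-3, m-2)]. -/
/-
Two-path Lindström–Gessel–Viennot. Along each anti-diagonal the row of a path changes by 0 or 1
per step, so a path from `(1,1)` to `(m,j)` and one from `(2,1)` to `(i,n)` start with the first weakly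
above the second and end with it weakly below; hence they meet. Exchanging the tails of two meeting
paths at the first vertex of the first path lying on the second is an involution, so it matches the
meeting pairs with ends `(i,n), (m,j)` with all pairs with ends `(m,j), (i,n)`. The non-intersecting
pairs number the product of the two path counts for the prescribed ends minus the product for the
exchanged ends, and by Pascal's rule there are `binom (c + d - a - b) (c - a)` paths from `(a,b)` to
`(c,d)`.
-/

/-- A single step in a monotone lattice path: one unit down or one unit right. -/
def IsStep (p q : ℕ × ℕ) : Prop := q = (p.1 + 1, p.2) ∨ q = (p.1, p.2 + 1)

/-- `L` is a monotone lattice path from `(a,b)` to `(c,d)`. -/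
def IsPath (a b c d : ℕ) (L : List (ℕ × ℕ)) : Prop :=
  L ≠ [] ∧ L.head? = some (a, b) ∧ L.getLast? = some (c, d) ∧ L.Chain' IsStep

/-- Binomial coefficient on integers, zero when `b < 0` or `b > a`. -/
def binom (a b : ℤ) : ℤ := if 0 ≤ b ∧ b ≤ a then (a.toNat.choose b.toNat : ℤ) else 0

lemma binom_natCast (x y : ℕ) : binom x y = x.choose y := by
  unfold binom
  split_ifs with h
  · simp
  · rw [Nat.choose_eq_zero_of_lt (by omega), Nat.cast_zero]

lemma binom_of_neg {a b : ℤ} (hb : b < 0) : binom a b = 0 :=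
  if_neg fun h => hb.not_ge h.1

lemma binom_of_nonpos {a : ℤ} (ha : a ≤ 0) (b : ℤ) :
    binom a b = if a = 0 ∧ b = 0 then 1 else 0 := by
  by_cases hab : a = 0 ∧ b = 0
  · obtain ⟨rfl, rfl⟩ := hab
    rfl
  · rw [if_neg hab, binom, if_neg (by omega)]

lemma binom_add_one {a : ℤ} (ha : 0 ≤ a) (b : ℤ) :
    binom (a + 1) b = binom a (b - 1) + binom a b := by
  lift a to ℕ using ha
  rcases lt_trichotomy b 0 with hb | rfl | hb
  · simp [binom_of_neg hb, binom_of_neg (show b - 1 < 0 by omega)]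
  · rw [binom_of_neg (b := 0 - 1) (by norm_num), zero_add, ← Nat.cast_succ, ← Nat.cast_zero,
      binom_natCast, binom_natCast, Nat.choose_zero_right, Nat.choose_zero_right]
  · lift b to ℕ using hb.le
    obtain ⟨b, rfl⟩ := Nat.exists_eq_add_one_of_ne_zero (by omega : b ≠ 0)
    push_cast
    rw [add_sub_cancel_right, ← Nat.cast_succ, ← Nat.cast_succ, binom_natCast, binom_natCast,
      binom_natCast, Nat.choose_succ_succ', Nat.cast_add]

lemma IsStep.le {p q : ℕ × ℕ} (h : IsStep p q) : p ≤ q := by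
  rcases h with rfl | rfl <;> simp [Prod.le_def]

lemma IsStep.fst_add_snd {p q : ℕ × ℕ} (h : IsStep p q) : q.1 + q.2 = p.1 + p.2 + 1 := by
  rcases h with rfl | rfl <;> simp only <;> omega

namespace IsPath

variable {a b c d : ℕ} {L : List (ℕ × ℕ)}

lemma exists_cons (h : IsPath a b c d L) : ∃ L', L = (a, b) :: L' := by
  obtain ⟨_, hhead, -, -⟩ := h
  cases L with
  | nil => simp at hhead
  | cons x L' => exact ⟨L', by simpa using hhead⟩

lemma head_eq {x : ℕ × ℕ} (h : IsPath a b c d (x :: L)) : x = (a, b) := by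
  simpa using h.2.1

lemma exists_append (h : IsPath a b c d L) : ∃ L', L = L' ++ [(c, d)] := by
  obtain ⟨_, -, hlast, -⟩ := h
  rw [List.getLast?_eq_some_iff] at hlast
  exact hlast

lemma getElem_fst_add_snd (h : IsPath a b c d L) (t : ℕ) (ht : t < L.length) :
    L[t].1 + L[t].2 = a + b + t := by
  induction t with
  | zero =>
    obtain ⟨L', rfl⟩ := h.exists_cons
    rfl
  | succ t ih =>
    rw [(List.isChain_iff_getElem.mp h.2.2.2 t ht).fst_add_snd, ih]; rfl

lemma mem_bounds (h : IsPath a b c d L) {v : ℕ × ℕ} (hv : v ∈ L) :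
    a ≤ v.1 ∧ b ≤ v.2 ∧ v.1 ≤ c ∧ v.2 ≤ d := by
  have hsorted : L.Pairwise (· ≤ ·) :=
    List.isChain_iff_pairwise.mp (h.2.2.2.imp fun _ _ => IsStep.le)
  suffices (a, b) ≤ v ∧ v ≤ (c, d) by simpa only [Prod.le_def, and_assoc] using this
  constructor
  · obtain ⟨L', rfl⟩ := h.exists_cons
    rcases List.mem_cons.mp hv with rfl | hv
    · rfl
    · exact List.rel_of_pairwise_cons hsorted hv
  · obtain ⟨L', rfl⟩ := h.exists_append
    rcases List.mem_append.mp hv with hv | hv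
    · exact List.pairwise_append.mp hsorted |>.2.2 v hv _ (List.mem_singleton_self _)
    · rw [List.mem_singleton.mp hv]

lemma length_eq (h : IsPath a b c d L) : L.length + (a + b) = c + d + 1 := by
  obtain ⟨L', hL'⟩ := h.exists_append
  have hlast := h.getElem_fst_add_snd L'.length (by simp [hL'])
  simp only [hL', List.getElem_append_right le_rfl, Nat.sub_self, List.getElem_singleton,
    List.length_append, List.length_singleton] at hlast ⊢
  omega

lemma start_le_end (h : IsPath a b c d L) : a ≤ c ∧ b ≤ d := by
  obtain ⟨L', hL'⟩ := h.exists_append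
  have := h.mem_bounds (hL' ▸ List.mem_append_right _ (List.mem_singleton_self _))
  exact ⟨this.1, this.2.1⟩

lemma nodup (h : IsPath a b c d L) : L.Nodup := by
  refine List.nodup_iff_injective_getElem.mpr fun s t hst => Fin.ext ?_
  have hs := h.getElem_fst_add_snd s s.2
  have ht := h.getElem_fst_add_snd t t.2
  simp only at hst
  rw [hst] at hs
  omega

end IsPath

section Counting

variable {a b c d : ℕ}

lemma isPath_iff {L : List (ℕ × ℕ)} : IsPath a b c d L ↔
    L ≠ [] ∧ L.head? = some (a, b) ∧ L.getLast? = some (c, d) ∧ L.IsChain IsStep :=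
  Iff.rfl

lemma not_isPath_nil : ¬IsPath a b c d [] := fun h => h.1 rfl

lemma isPath_singleton_iff {x : ℕ × ℕ} : IsPath a b c d [x] ↔ x = (a, b) ∧ x = (c, d) := by
  simp [isPath_iff, eq_comm]

lemma isPath_cons_cons_iff {x y : ℕ × ℕ} {L : List (ℕ × ℕ)} :
    IsPath a b c d (x :: y :: L) ↔ x = (a, b) ∧ IsStep x y ∧ IsPath y.1 y.2 c d (y :: L) := by
  simp [isPath_iff, and_left_comm]

def pathSet (a b c d : ℕ) : Set (List (ℕ × ℕ)) := {L | IsPath a b c d L}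

lemma pathSet_of_le (h : c + d ≤ a + b) :
    pathSet a b c d = if (a, b) = (c, d) then {[(a, b)]} else ∅ := by
  ext L
  rcases L with _ | ⟨x, _ | ⟨y, L⟩⟩
  · split_ifs <;> simp [pathSet, not_isPath_nil]
  · simp only [pathSet, Set.mem_ofPred_eq, isPath_singleton_iff]
    split_ifs with hab
    · simp [hab]
    · simpa using fun hx => hx ▸ hab
  · suffices ¬IsPath a b c d (x :: y :: L) by split_ifs <;> simpa [pathSet]
    intro hP
    have := hP.length_eq
    simp only [List.length_cons] at this
    omega

lemma pathSet_eq_image_cons (h : a + b < c + d) :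
    pathSet a b c d = List.cons (a, b) '' (pathSet (a + 1) b c d ∪ pathSet a (b + 1) c d) := by
  ext L
  rcases L with _ | ⟨x, _ | ⟨y, L⟩⟩
  · simp [pathSet, not_isPath_nil]
  · simp only [pathSet, Set.mem_ofPred_eq, isPath_singleton_iff, Set.mem_image, Set.mem_union,
      List.cons.injEq, exists_eq_right_right, not_isPath_nil, or_self, false_and, iff_false, not_and]
    rintro rfl hend
    simp only [Prod.mk.injEq] at hend
    omega
  · simp only [pathSet, Set.mem_ofPred_eq, isPath_cons_cons_iff, Set.mem_image, Set.mem_union,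
      List.cons.injEq, exists_eq_right_right]
    constructor
    · rintro ⟨rfl, hstep | hstep, hP⟩ <;> subst hstep
      exacts [⟨Or.inl hP, rfl⟩, ⟨Or.inr hP, rfl⟩]
    · rintro ⟨hP | hP, rfl⟩
      · exact ⟨rfl, Or.inl hP.head_eq, hP.head_eq ▸ hP⟩
      · exact ⟨rfl, Or.inr hP.head_eq, hP.head_eq ▸ hP⟩

lemma disjoint_pathSet_down_right :
    Disjoint (pathSet (a + 1) b c d) (pathSet a (b + 1) c d) := by
  refine Set.disjoint_left.mpr fun L h₁ h₂ => ?_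
  obtain ⟨L₁, rfl⟩ := IsPath.exists_cons h₁
  have := IsPath.head_eq h₂
  simp only [Prod.mk.injEq] at this
  omega

theorem pathSet_finite (a b c d : ℕ) : (pathSet a b c d).Finite := by
  rcases le_or_gt (c + d) (a + b) with hle | hlt
  · rw [pathSet_of_le hle]
    split_ifs
    exacts [Set.finite_singleton _, Set.finite_empty]
  · rw [pathSet_eq_image_cons hlt]
    exact ((pathSet_finite (a + 1) b c d).union (pathSet_finite a (b + 1) c d)).image _
termination_by c + d - (a + b)

theorem ncard_pathSet (a b c d : ℕ) :
    ((pathSet a b c d).ncard : ℤ) = binom ((c : ℤ) + d - a - b) ((c : ℤ) - a) := by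
  rcases le_or_gt (c + d) (a + b) with hle | hlt
  · rw [pathSet_of_le hle, binom_of_nonpos (by omega)]
    by_cases hab : a = c ∧ b = d
    · obtain ⟨rfl, rfl⟩ := hab
      simp
    · rw [if_neg (by simpa only [Prod.mk.injEq] using hab), if_neg (by omega), Set.ncard_empty,
        Nat.cast_zero]
  · rw [pathSet_eq_image_cons hlt, List.cons_injective.injOn.ncard_image,
      Set.ncard_union_eq disjoint_pathSet_down_right (pathSet_finite _ _ _ _)
        (pathSet_finite _ _ _ _),
      Nat.cast_add, ncard_pathSet (a + 1) b c d, ncard_pathSet a (b + 1) c d,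
      show (c : ℤ) + d - a - b = (c + d - a - b - 1) + 1 by ring, binom_add_one (by omega)]
    push_cast
    congr 1 <;> congr 1 <;> ring
termination_by c + d - (a + b)

end Counting

section TailSwap

variable {α : Type*} [DecidableEq α]

def tailSwap (PQ : List α × List α) : List α × List α :=
  match PQ.1.find? (· ∈ PQ.2) with
  | none => PQ
  | some v => (PQ.1.takeWhile (· ≠ v) ++ PQ.2.dropWhile (· ≠ v),
      PQ.2.takeWhile (· ≠ v) ++ PQ.1.dropWhile (· ≠ v))

lemma takeWhile_ne_append_cons {A C : List α} {v : α} (hv : v ∉ A) :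
    (A ++ v :: C).takeWhile (· ≠ v) = A := by
  rw [List.takeWhile_append_of_pos (fun _ hx => decide_eq_true (ne_of_mem_of_not_mem hx hv))]
  simp

lemma dropWhile_ne_append_cons {A C : List α} {v : α} (hv : v ∉ A) :
    (A ++ v :: C).dropWhile (· ≠ v) = v :: C := by
  rw [List.dropWhile_append_of_pos (fun _ hx => decide_eq_true (ne_of_mem_of_not_mem hx hv))]
  simp

lemma tailSwap_append_cons {A B C D : List α} {v : α} (hA : ∀ x ∈ A, x ∉ B ++ v :: D)
    (hB : v ∉ B) : tailSwap (A ++ v :: C, B ++ v :: D) = (A ++ v :: D, B ++ v :: C) := by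
  have hfind : (A ++ v :: C).find? (· ∈ B ++ v :: D) = some v :=
    List.find?_eq_some_iff_append.mpr ⟨by simp, A, C, rfl, by simpa using hA⟩
  have hvA : v ∉ A := fun hv => hA v hv (by simp)
  simp only [tailSwap, hfind, takeWhile_ne_append_cons hvA, takeWhile_ne_append_cons hB,
    dropWhile_ne_append_cons hvA, dropWhile_ne_append_cons hB]

lemma exists_append_cons_of_mem_of_mem {P Q : List α} (h : ∃ v ∈ P, v ∈ Q) :
    ∃ A B C D v, P = A ++ v :: C ∧ Q = B ++ v :: D ∧ (∀ x ∈ A, x ∉ Q) ∧ v ∉ B := by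
  have hfind : P.find? (· ∈ Q) ≠ none := fun hnone => by
    obtain ⟨v, hvP, hvQ⟩ := h
    exact List.find?_eq_none.mp hnone v hvP (by simpa using hvQ)
  obtain ⟨v, hv⟩ := Option.ne_none_iff_exists'.mp hfind
  obtain ⟨hvQ, A, C, rfl, hA⟩ := List.find?_eq_some_iff_append.mp hv
  obtain ⟨B, D, rfl, hB⟩ := List.eq_append_cons_of_mem (by simpa using hvQ)
  exact ⟨A, B, C, D, v, rfl, rfl, by simpa using hA, hB⟩

lemma tailSwap_tailSwap {PQ : List α × List α} (hP : PQ.1.Nodup) (h : ∃ v ∈ PQ.1, v ∈ PQ.2) :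
    tailSwap (tailSwap PQ) = PQ := by
  obtain ⟨A, B, C, D, v, hPeq, hQeq, hA, hB⟩ := exists_append_cons_of_mem_of_mem h
  obtain ⟨P, Q⟩ := PQ
  subst hPeq hQeq
  rw [tailSwap_append_cons hA hB, tailSwap_append_cons _ hB]
  intro x hxA hx
  rcases List.mem_append.mp hx with hxB | hx
  · exact hA x hxA (List.mem_append_left _ hxB)
  rcases List.mem_cons.mp hx with rfl | hxC
  · exact hA x hxA List.mem_append_cons_self
  · exact List.disjoint_of_nodup_append hP hxA (List.mem_cons_of_mem _ hxC)

end TailSwap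

lemma IsPath.splice {a b c d e f g h : ℕ} {A B C D : List (ℕ × ℕ)} {v : ℕ × ℕ}
    (hP : IsPath a b c d (A ++ v :: C)) (hQ : IsPath e f g h (B ++ v :: D)) :
    IsPath a b g h (A ++ v :: D) := by
  obtain ⟨-, hhead, -, hchainP⟩ := hP
  obtain ⟨-, -, hlast, hchainQ⟩ := hQ
  refine ⟨by simp, ?_, ?_, ?_⟩
  · cases A <;> simpa using hhead
  · simpa using hlast
  · have hAv : (A ++ [v]).IsChain IsStep := by
      rw [← List.singleton_append, ← List.append_assoc] at hchainP
      exact hchainP.left_of_append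
    have hvD : ([v] ++ D).IsChain IsStep := hchainQ.right_of_append
    show (A ++ v :: D).IsChain IsStep
    simpa using hAv.append_overlap hvD (List.cons_ne_nil _ _)

lemma exists_mem_mem_of_fst_le_of_fst_ge {P Q : List (ℕ × ℕ)} (hP : P.IsChain IsStep)
    (hQ : Q.IsChain IsStep) {s t : ℕ} (K : ℕ) (hs : s + K < P.length) (ht : t + K < Q.length)
    (hdiag : P[s].1 + P[s].2 = Q[t].1 + Q[t].2) (h₀ : P[s].1 ≤ Q[t].1)
    (hK : Q[t + K].1 ≤ P[s + K].1) : ∃ v ∈ P, v ∈ Q := by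
  induction K generalizing s t with
  | zero =>
    simp only [Nat.add_zero] at hK
    have hPQ : P[s] = Q[t] := Prod.ext (by omega) (by omega)
    exact ⟨Q[t], hPQ ▸ List.getElem_mem _, List.getElem_mem _⟩
  | succ K ih =>
    by_cases hfst : P[s].1 = Q[t].1
    · have hPQ : P[s] = Q[t] := Prod.ext hfst (by omega)
      exact ⟨Q[t], hPQ ▸ List.getElem_mem _, List.getElem_mem _⟩
    have hstepP := List.isChain_iff_getElem.mp hP s (by omega)
    have hstepQ := List.isChain_iff_getElem.mp hQ t (by omega)
    have hPle := Prod.le_def.mp hstepP.le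
    have hQle := Prod.le_def.mp hstepQ.le
    have hPdiag := hstepP.fst_add_snd
    refine ih (s := s + 1) (t := t + 1) (by omega) (by omega)
      (by rw [hPdiag, hstepQ.fst_add_snd, hdiag]) (by omega) ?_
    convert hK using 3 <;> omega

theorem IsPath.exists_mem_mem_of_crossing {a b c d c' d' : ℕ} {P Q : List (ℕ × ℕ)}
    (hP : IsPath a b c d P) (hQ : IsPath (a + 1) b c' d' Q) (hc : c' ≤ c) (hd : d ≤ d') :
    ∃ v ∈ P, v ∈ Q := by
  have hPt (t : ℕ) (ht : t < P.length) :=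
    And.intro (hP.getElem_fst_add_snd t ht) (hP.mem_bounds (List.getElem_mem ht))
  have hQt (t : ℕ) (ht : t < Q.length) :=
    And.intro (hQ.getElem_fst_add_snd t ht) (hQ.mem_bounds (List.getElem_mem ht))
  have hPlen := hP.length_eq
  have hQlen := hQ.length_eq
  have hPends := hP.start_le_end
  have hQends := hQ.start_le_end
  set K := min (c + d) (c' + d') - (a + b + 1)
  have hPfirst := hPt 1 (by omega)
  have hQfirst := hQt 0 (by omega)
  have hPlast := hPt (1 + K) (by omega)
  have hQlast := hQt (0 + K) (by omega)
  exact exists_mem_mem_of_fst_le_of_fst_ge hP.2.2.2 hQ.2.2.2 (s := 1) (t := 0) K (by omega)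
    (by omega) (by omega) (by omega) (by omega)

section TwoPaths

variable {a b c d e f g h : ℕ}

def meetingPairs (a b c d e f g h : ℕ) : Set (List (ℕ × ℕ) × List (ℕ × ℕ)) :=
  {PQ | IsPath a b c d PQ.1 ∧ IsPath e f g h PQ.2 ∧ ∃ v ∈ PQ.1, v ∈ PQ.2}

lemma mapsTo_tailSwap_meetingPairs :
    Set.MapsTo tailSwap (meetingPairs a b c d e f g h) (meetingPairs a b g h e f c d) := by
  rintro ⟨P, Q⟩ ⟨hP, hQ, hmeet⟩
  obtain ⟨A, B, C, D, v, rfl, rfl, hA, hB⟩ := exists_append_cons_of_mem_of_mem hmeet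
  rw [tailSwap_append_cons hA hB]
  exact ⟨hP.splice hQ, hQ.splice hP, v, List.mem_append_cons_self,
    List.mem_append_cons_self⟩

lemma leftInvOn_tailSwap_meetingPairs :
    Set.LeftInvOn tailSwap tailSwap (meetingPairs a b c d e f g h) :=
  fun _ hPQ => tailSwap_tailSwap hPQ.1.nodup hPQ.2.2

lemma ncard_meetingPairs_comm :
    (meetingPairs a b c d e f g h).ncard = (meetingPairs a b g h e f c d).ncard :=
  (Set.InvOn.bijOn ⟨leftInvOn_tailSwap_meetingPairs, leftInvOn_tailSwap_meetingPairs⟩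
    mapsTo_tailSwap_meetingPairs mapsTo_tailSwap_meetingPairs).ncard_eq

theorem ncard_nonintersecting_pairs
    (hmeet : ∀ P Q, IsPath a b g h P → IsPath e f c d Q → ∃ v ∈ P, v ∈ Q) :
    ({PQ : List (ℕ × ℕ) × List (ℕ × ℕ) |
        IsPath a b c d PQ.1 ∧ IsPath e f g h PQ.2 ∧ ∀ v ∈ PQ.1, v ∉ PQ.2}.ncard : ℤ) =
      (pathSet a b c d).ncard * (pathSet e f g h).ncard -
        (pathSet a b g h).ncard * (pathSet e f c d).ncard := by
  have hsplit : {PQ : List (ℕ × ℕ) × List (ℕ × ℕ) |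
        IsPath a b c d PQ.1 ∧ IsPath e f g h PQ.2 ∧ ∀ v ∈ PQ.1, v ∉ PQ.2} =
      pathSet a b c d ×ˢ pathSet e f g h \ meetingPairs a b c d e f g h := by
    ext PQ
    simp only [pathSet, meetingPairs, Set.mem_ofPred_eq, Set.mem_sdiff, Set.mem_prod, not_and,
      not_exists]
    tauto
  have hall : meetingPairs a b g h e f c d = pathSet a b g h ×ˢ pathSet e f c d :=
    Set.ext fun _ => ⟨fun hPQ => ⟨hPQ.1, hPQ.2.1⟩, fun hPQ => ⟨hPQ.1, hPQ.2, hmeet _ _ hPQ.1 hPQ.2⟩⟩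
  have hsub : meetingPairs a b c d e f g h ⊆ pathSet a b c d ×ˢ pathSet e f g h :=
    fun _ hPQ => ⟨hPQ.1, hPQ.2.1⟩
  have hcount := Set.ncard_sdiff_add_ncard_of_subset hsub
    ((pathSet_finite a b c d).prod (pathSet_finite e f g h))
  rw [ncard_meetingPairs_comm, hall, Set.ncard_prod, Set.ncard_prod, ← hsplit] at hcount
  rw [eq_sub_iff_add_eq]
  exact_mod_cast hcount

end TwoPaths

theorem nonintersecting_pair_count_general (m n i j : ℕ)
    (him : i ≤ m) (hjn : j ≤ n) :
    ({PQ : List (ℕ × ℕ) × List (ℕ × ℕ) |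
        IsPath 1 1 i n PQ.1 ∧ IsPath 2 1 m j PQ.2 ∧
        ∀ v ∈ PQ.1, v ∉ PQ.2}.ncard : ℤ) =
      (Matrix.of ![![binom ((i : ℤ) + n - 2) ((i : ℤ) - 1), binom ((m : ℤ) + j - 2) ((m : ℤ) - 1)],
                    ![binom ((i : ℤ) + n - 3) ((i : ℤ) - 2), binom ((m : ℤ) + j - 3) ((m : ℤ) - 2)]]).det := by
  rw [ncard_nonintersecting_pairs fun _ _ hP hQ => hP.exists_mem_mem_of_crossing hQ him hjn,
    Matrix.det_fin_two_of]
  simp only [ncard_pathSet]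
  push_cast
  ring_nf

theorem nonintersecting_pair_count (m n i j : ℕ)
    (hi1 : 1 ≤ i) (him : i ≤ m) (hj1 : 1 ≤ j) (hjn : j ≤ n) :
    ({PQ : List (ℕ × ℕ) × List (ℕ × ℕ) |
        IsPath 1 1 i n PQ.1 ∧ IsPath 2 1 m j PQ.2 ∧
        ∀ v ∈ PQ.1, v ∉ PQ.2}.ncard : ℤ) =
      (Matrix.of ![![binom ((i : ℤ) + n - 2) ((i : ℤ) - 1), binom ((m : ℤ) + j - 2) ((m : ℤ) - 1)],
                    ![binom ((i : ℤ) + n - 3) ((i : ℤ) - 2), binom ((m : ℤ) + j - 3) ((m : ℤ) - 2)]]).det :=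
  nonintersecting_pair_count_general m n i j him hjn
end

section
/- For integers m, n ≥ 2, the sum over all pairs (i,j) with 1 ≤ i ≤ m, 1 ≤ j ≤ n, (i,j) ≠ (m,n), of C(m+n-i-j, m-i) · [C(i+n-2,i-1)·C(m+j-3,m-2) − C(m+j-2,m-1)·C(i+n-3,i-2)] equals C(n+m-2, m-1)². -/
open Finset

/-- Hockey-stick style sum. -/
lemma mult_aux_hs (r : ℕ) : ∀ N : ℕ, ∑ k ∈ range (N+1), (r+k).choose k = (r+N+1).choose N := by
  intro N
  induction N with
  | zero => simp
  | succ N ih =>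
    rw [sum_range_succ, ih, show r+(N+1)+1 = (r+N+1)+1 by ring, Nat.choose_succ_succ]
    rfl

/-- A Vandermonde-type convolution. -/
lemma mult_aux_vdm (r : ℕ) : ∀ N s : ℕ,
    ∑ k ∈ range (N+1), (r+k).choose k * (s + (N-k)).choose (N-k) = (r+s+N+1).choose N := by
  intro N
  induction N with
  | zero => intro s; simp
  | succ N ih =>
    intro s
    induction s with
    | zero =>
      have h : ∀ k ∈ range (N+2),
          (r+k).choose k * (0 + (N+1-k)).choose (N+1-k) = (r+k).choose k := by
        intro k _; simp
      rw [sum_congr rfl h, mult_aux_hs r (N+1), show r+0+(N+1)+1 = r+(N+1)+1 by ring]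
    | succ s ihs =>
      rw [sum_range_succ]
      have split : ∀ k ∈ range (N+1),
          (r+k).choose k * ((s+1) + (N+1-k)).choose (N+1-k)
          = (r+k).choose k * ((s+1) + (N-k)).choose (N-k)
            + (r+k).choose k * (s + (N+1-k)).choose (N+1-k) := by
        intro k hk
        simp only [mem_range] at hk
        have h1 : N+1-k = (N-k)+1 := by omega
        rw [h1]
        have h2 : (s+1+(N-k+1)).choose (N-k+1)
            = (s+1+(N-k)).choose (N-k) + (s+(N-k+1)).choose (N-k+1) := by
          rw [show s+1+(N-k+1) = (s+1+(N-k))+1 by ring, Nat.choose_succ_succ,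
            show s+(N-k+1) = s+1+(N-k) by ring]
        rw [h2, mul_add]
      rw [sum_congr rfl split, sum_add_distrib, ih (s+1)]
      rw [sum_range_succ] at ihs
      simp only [Nat.sub_self, Nat.add_zero, Nat.choose_zero_right, mul_one] at ihs ⊢
      have pasc : (r+(s+1)+(N+1)+1).choose (N+1)
          = (r+s+N+2).choose N + (r+s+N+2).choose (N+1) := by
        rw [show r+(s+1)+(N+1)+1 = (r+s+N+2)+1 by ring, Nat.choose_succ_succ]
      have e1 : r+(s+1)+N+1 = r+s+N+2 := by ring
      have e2 : r+s+(N+1)+1 = r+s+N+2 := by ring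
      rw [e1]
      rw [e2] at ihs
      omega

/-- Symmetry of binomial coefficients. -/
lemma mult_aux_cs (x y : ℕ) : (x+y).choose x = (x+y).choose y := by
  have h := Nat.choose_symm (Nat.le_add_right x y)
  rw [Nat.add_sub_cancel_left] at h
  exact h.symm

/-- The main identity, in natural-number form. -/
lemma mult_aux_key (M N : ℕ) :
    ∑ a ∈ range (M+2), ∑ b ∈ range (N+2),
      (((M+1-a) + (N+1-b)).choose (M+1-a) : ℤ) *
        (((a + (N+1)).choose a : ℤ) * ((M + b).choose M : ℤ) -
         ((M+1+b).choose (M+1) : ℤ) *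
           (if a = 0 then 0 else ((a-1 + (N+1)).choose (a-1) : ℤ)))
    = (((M+N+2).choose (M+1) : ℤ))^2 := by
  have inner1 : ∀ a, ∑ b ∈ range (N+2), ((M+1-a) + (N+1-b)).choose (M+1-a) * (M+b).choose M
      = (M + (M+1-a) + (N+1) + 1).choose (N+1) := by
    intro a
    rw [← mult_aux_vdm M (N+1) (M+1-a)]
    refine sum_congr rfl fun b _ => ?_
    rw [mult_aux_cs (M+1-a) (N+1-b), mult_aux_cs M b]
    ring
  have inner2 : ∀ a, ∑ b ∈ range (N+2), ((M+1-a) + (N+1-b)).choose (M+1-a) * (M+1+b).choose (M+1)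
      = (M+1 + (M+1-a) + (N+1) + 1).choose (N+1) := by
    intro a
    rw [← mult_aux_vdm (M+1) (N+1) (M+1-a)]
    refine sum_congr rfl fun b _ => ?_
    rw [mult_aux_cs (M+1-a) (N+1-b), mult_aux_cs (M+1) b]
    ring
  set f : ℕ → ℤ := fun a =>
    if a = 0 then 0 else ((a-1 + (N+1)).choose (a-1) : ℤ) * ((2*M+N+4-a).choose (N+1) : ℤ)
    with hf
  have step : ∀ a ∈ range (M+2), (∑ b ∈ range (N+2),
      (((M+1-a) + (N+1-b)).choose (M+1-a) : ℤ) *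
        (((a + (N+1)).choose a : ℤ) * ((M + b).choose M : ℤ) -
         ((M+1+b).choose (M+1) : ℤ) *
           (if a = 0 then 0 else ((a-1 + (N+1)).choose (a-1) : ℤ))))
      = f (a+1) - f a := by
    intro a ha
    simp only [mem_range] at ha
    have expand : ∀ b ∈ range (N+2),
        (((M+1-a) + (N+1-b)).choose (M+1-a) : ℤ) *
          (((a + (N+1)).choose a : ℤ) * ((M + b).choose M : ℤ) -
           ((M+1+b).choose (M+1) : ℤ) *
             (if a = 0 then 0 else ((a-1 + (N+1)).choose (a-1) : ℤ)))
        = ((a + (N+1)).choose a : ℤ) * ((((M+1-a) + (N+1-b)).choose (M+1-a) * (M+b).choose M : ℕ) : ℤ)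
          - (if a = 0 then 0 else ((a-1 + (N+1)).choose (a-1) : ℤ)) *
            ((((M+1-a) + (N+1-b)).choose (M+1-a) * (M+1+b).choose (M+1) : ℕ) : ℤ) := by
      intro b _
      push_cast
      ring
    rw [sum_congr rfl expand, sum_sub_distrib, ← mul_sum, ← mul_sum, ← Nat.cast_sum, ← Nat.cast_sum,
      inner1 a, inner2 a]
    have e1 : M + (M+1-a) + (N+1) + 1 = 2*M+N+4-(a+1) := by omega
    have e2 : M+1 + (M+1-a) + (N+1) + 1 = 2*M+N+4-a := by omega
    rw [e1, e2, hf]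
    rcases Nat.eq_zero_or_pos a with h0 | hpos
    · subst h0; simp
    · have : a ≠ 0 := by omega
      simp only [this, if_neg, Nat.add_eq_zero, and_false, if_false, Nat.succ_ne_zero,
        Nat.add_sub_cancel]
  rw [sum_congr rfl step, Finset.sum_range_sub f (M+2)]
  have e3 : 2*M+N+4-(M+2) = M+N+2 := by omega
  have e4 : M+1+(N+1) = M+N+2 := by omega
  have e5 : (M+N+2).choose (N+1) = (M+N+2).choose (M+1) := by
    rw [← e4, mult_aux_cs (M+1) (N+1)]
  have h0 : f 0 = 0 := by simp [hf]
  have h2 : f (M+2) = ((M+N+2).choose (M+1) : ℤ) * ((M+N+2).choose (M+1) : ℤ) := by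
    rw [hf]
    beta_reduce
    rw [if_neg (by omega : ¬(M+2=0)), show M+2-1 = M+1 from rfl, e3, e4, e5]
  rw [h0, h2]
  ring

lemma binom_eq_choose (x y : ℤ) (u v : ℕ) (h1 : x = u) (h2 : y = v) (h : v ≤ u) :
    binom x y = (u.choose v : ℤ) := by
  subst h1; subst h2
  unfold binom
  rw [if_pos ⟨Int.natCast_nonneg v, by exact_mod_cast h⟩]
  simp

lemma binom_of_neg_s2 (x y : ℤ) (h : y < 0) : binom x y = 0 := by
  unfold binom
  rw [if_neg]
  rintro ⟨h1, -⟩; omega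

lemma mult_aux_term (M N a b : ℕ) (ha : a < M+2) (hb : b < N+2) :
    binom (((M+2 : ℕ) : ℤ) + ((N+2 : ℕ) : ℤ) - ((1+a : ℕ) : ℤ) - ((1+b : ℕ) : ℤ))
        (((M+2 : ℕ) : ℤ) - ((1+a : ℕ) : ℤ)) *
      (binom (((1+a : ℕ) : ℤ) + ((N+2 : ℕ) : ℤ) - 2) (((1+a : ℕ) : ℤ) - 1) *
         binom (((M+2 : ℕ) : ℤ) + ((1+b : ℕ) : ℤ) - 3) (((M+2 : ℕ) : ℤ) - 2) -
       binom (((M+2 : ℕ) : ℤ) + ((1+b : ℕ) : ℤ) - 2) (((M+2 : ℕ) : ℤ) - 1) *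
         binom (((1+a : ℕ) : ℤ) + ((N+2 : ℕ) : ℤ) - 3) (((1+a : ℕ) : ℤ) - 2))
    = (((M+1-a) + (N+1-b)).choose (M+1-a) : ℤ) *
        (((a + (N+1)).choose a : ℤ) * ((M + b).choose M : ℤ) -
         ((M+1+b).choose (M+1) : ℤ) *
           (if a = 0 then 0 else ((a-1 + (N+1)).choose (a-1) : ℤ))) := by
  have b1 : binom (((M+2 : ℕ) : ℤ) + ((N+2 : ℕ) : ℤ) - ((1+a : ℕ) : ℤ) - ((1+b : ℕ) : ℤ))
        (((M+2 : ℕ) : ℤ) - ((1+a : ℕ) : ℤ))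
      = (((M+1-a) + (N+1-b)).choose (M+1-a) : ℤ) :=
    binom_eq_choose _ _ _ _ (by omega) (by omega) (by omega)
  have b2 : binom (((1+a : ℕ) : ℤ) + ((N+2 : ℕ) : ℤ) - 2) (((1+a : ℕ) : ℤ) - 1)
      = ((a + (N+1)).choose a : ℤ) :=
    binom_eq_choose _ _ _ _ (by omega) (by omega) (by omega)
  have b3 : binom (((M+2 : ℕ) : ℤ) + ((1+b : ℕ) : ℤ) - 3) (((M+2 : ℕ) : ℤ) - 2)
      = ((M + b).choose M : ℤ) :=
    binom_eq_choose _ _ _ _ (by omega) (by omega) (by omega)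
  have b4 : binom (((M+2 : ℕ) : ℤ) + ((1+b : ℕ) : ℤ) - 2) (((M+2 : ℕ) : ℤ) - 1)
      = ((M+1+b).choose (M+1) : ℤ) :=
    binom_eq_choose _ _ _ _ (by omega) (by omega) (by omega)
  have b5 : binom (((1+a : ℕ) : ℤ) + ((N+2 : ℕ) : ℤ) - 3) (((1+a : ℕ) : ℤ) - 2)
      = (if a = 0 then 0 else ((a-1 + (N+1)).choose (a-1) : ℤ)) := by
    rcases Nat.eq_zero_or_pos a with h0 | hpos
    · subst h0
      rw [if_pos rfl]
      exact binom_of_neg_s2 _ _ (by norm_num)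
    · rw [if_neg (by omega)]
      exact binom_eq_choose _ _ _ _ (by omega) (by omega) (by omega)
  rw [b1, b2, b3, b4, b5]

theorem multiplicity_identity (m n : ℕ) (hm : 2 ≤ m) (hn : 2 ≤ n) :
    ∑ p ∈ ((Finset.Icc 1 m) ×ˢ (Finset.Icc 1 n)).erase (m, n),
        binom ((m : ℤ) + n - p.1 - p.2) ((m : ℤ) - p.1) *
          (binom ((p.1 : ℤ) + n - 2) ((p.1 : ℤ) - 1) * binom ((m : ℤ) + p.2 - 3) ((m : ℤ) - 2) -
           binom ((m : ℤ) + p.2 - 2) ((m : ℤ) - 1) * binom ((p.1 : ℤ) + n - 3) ((p.1 : ℤ) - 2)) =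
      (binom ((n : ℤ) + m - 2) ((m : ℤ) - 1)) ^ 2 := by
  obtain ⟨M, rfl⟩ : ∃ M, m = M + 2 := ⟨m - 2, by omega⟩
  obtain ⟨N, rfl⟩ : ∃ N, n = N + 2 := ⟨n - 2, by omega⟩
  rw [Finset.sum_erase _ (by ring)]
  rw [Finset.sum_product]
  rw [← Finset.Ico_add_one_right_eq_Icc, Finset.sum_Ico_eq_sum_range]
  have hR : ∀ a ∈ range (M+2),
      (∑ j ∈ Finset.Icc 1 (N+2),
        binom (((M+2 : ℕ) : ℤ) + ((N+2 : ℕ) : ℤ) - ((1+a : ℕ) : ℤ) - (j : ℤ))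
            (((M+2 : ℕ) : ℤ) - ((1+a : ℕ) : ℤ)) *
          (binom (((1+a : ℕ) : ℤ) + ((N+2 : ℕ) : ℤ) - 2) (((1+a : ℕ) : ℤ) - 1) *
             binom (((M+2 : ℕ) : ℤ) + (j : ℤ) - 3) (((M+2 : ℕ) : ℤ) - 2) -
           binom (((M+2 : ℕ) : ℤ) + (j : ℤ) - 2) (((M+2 : ℕ) : ℤ) - 1) *
             binom (((1+a : ℕ) : ℤ) + ((N+2 : ℕ) : ℤ) - 3) (((1+a : ℕ) : ℤ) - 2)))
      = ∑ b ∈ range (N+2),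
          (((M+1-a) + (N+1-b)).choose (M+1-a) : ℤ) *
            (((a + (N+1)).choose a : ℤ) * ((M + b).choose M : ℤ) -
             ((M+1+b).choose (M+1) : ℤ) *
               (if a = 0 then 0 else ((a-1 + (N+1)).choose (a-1) : ℤ))) := by
    intro a ha
    simp only [mem_range] at ha
    rw [← Finset.Ico_add_one_right_eq_Icc, Finset.sum_Ico_eq_sum_range]
    have : N + 2 + 1 - 1 = N + 2 := by omega
    rw [this]
    refine sum_congr rfl fun b hb => ?_
    simp only [mem_range] at hb
    exact mult_aux_term M N a b ha hb
  have hrange : M + 2 + 1 - 1 = M + 2 := by omega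
  rw [hrange, sum_congr rfl hR, mult_aux_key M N,
    binom_eq_choose _ _ (M+N+2) (M+1) (by omega) (by omega) (by omega)]
end

section
/- Let Δ be the simplicial complex on vertex set {x_{i,j}, y_{i,j} : 1 ≤ i ≤ m, 1 ≤ j ≤ n} whose faces are the squarefree monomials not divisible by any monomial in the families A, B, C, D, E (defined in context). Then every facet of Δ contains the vertex x_{m,n}. -/
/-- Vertices of the complex: `(true, i, j)` is `x_{i,j}`, `(false, i, j)` is `y_{i,j}`. -/
abbrev V : Type := Bool × ℕ × ℕ

def InGrid (m n : ℕ) (v : V) : Prop :=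
  1 ≤ v.2.1 ∧ v.2.1 ≤ m ∧ 1 ≤ v.2.2 ∧ v.2.2 ≤ n

/-- A face of `Δ_{LT(J)}`: a set of vertices in the grid whose squarefree monomial
is divisible by no element of the families A, B, C, D, E. -/
def IsFace (m n : ℕ) (F : Finset V) : Prop :=
  (∀ v ∈ F, InGrid m n v) ∧
  (∀ i j k l : ℕ, i < j → k < l → ¬((true, i, l) ∈ F ∧ (true, j, k) ∈ F)) ∧
  (∀ i j k l : ℕ, i < j → k < l → ¬((true, i, k) ∈ F ∧ (false, j, l) ∈ F)) ∧
  (∀ i j k p q r : ℕ, i < j → j ≤ k → p < q → q < r →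
      ¬((true, k, p) ∈ F ∧ (false, j, q) ∈ F ∧ (false, i, r) ∈ F)) ∧
  (∀ i j k p q r : ℕ, i < j → j < k → p < q → q ≤ r →
      ¬((true, i, r) ∈ F ∧ (false, j, q) ∈ F ∧ (false, k, p) ∈ F)) ∧
  (∀ i j k p q r : ℕ, i < j → j < k → p < q → q < r →
      ¬((false, i, r) ∈ F ∧ (false, j, q) ∈ F ∧ (false, k, p) ∈ F))

/-- A facet: an inclusion-maximal face. -/
def IsFacet (m n : ℕ) (F : Finset V) : Prop :=
  IsFace m n F ∧ ∀ G : Finset V, IsFace m n G → F ⊆ G → F = G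

theorem facet_contains_xmn (m n : ℕ) (hm : 2 ≤ m) (hmn : m ≤ n) (F : Finset V)
    (hF : IsFacet m n F) : (true, m, n) ∈ F := by
  obtain ⟨⟨hGrid, hA, hB, hC, hD, hE⟩, hmax⟩ := hF
  have hface : IsFace m n (insert (true, m, n) F) := by
    refine ⟨?_, ?_, ?_, ?_, ?_, ?_⟩
    · intro v hv
      rcases Finset.mem_insert.mp hv with h | h
      · subst h; simp only [InGrid]; omega
      · exact hGrid v h
    · rintro i j k l hij hkl ⟨h1, h2⟩
      rcases Finset.mem_insert.mp h1 with h1 | h1 <;>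
        rcases Finset.mem_insert.mp h2 with h2 | h2
      · simp only [Prod.mk.injEq] at h1 h2; omega
      · simp only [Prod.mk.injEq] at h1
        have := hGrid _ h2; simp only [InGrid] at this; omega
      · simp only [Prod.mk.injEq] at h2
        have := hGrid _ h1; simp only [InGrid] at this; omega
      · exact hA i j k l hij hkl ⟨h1, h2⟩
    · rintro i j k l hij hkl ⟨h1, h2⟩
      rcases Finset.mem_insert.mp h2 with h2 | h2
      · simp at h2
      rcases Finset.mem_insert.mp h1 with h1 | h1
      · simp only [Prod.mk.injEq] at h1
        have := hGrid _ h2; simp only [InGrid] at this; omega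
      · exact hB i j k l hij hkl ⟨h1, h2⟩
    · rintro i j k p q r hij hjk hpq hqr ⟨h1, h2, h3⟩
      rcases Finset.mem_insert.mp h2 with h2 | h2
      · simp at h2
      rcases Finset.mem_insert.mp h3 with h3 | h3
      · simp at h3
      rcases Finset.mem_insert.mp h1 with h1 | h1
      · simp only [Prod.mk.injEq] at h1
        have := hGrid _ h2; simp only [InGrid] at this; omega
      · exact hC i j k p q r hij hjk hpq hqr ⟨h1, h2, h3⟩
    · rintro i j k p q r hij hjk hpq hqr ⟨h1, h2, h3⟩
      rcases Finset.mem_insert.mp h2 with h2 | h2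
      · simp at h2
      rcases Finset.mem_insert.mp h3 with h3 | h3
      · simp at h3
      rcases Finset.mem_insert.mp h1 with h1 | h1
      · simp only [Prod.mk.injEq] at h1
        have := hGrid _ h2; simp only [InGrid] at this; omega
      · exact hD i j k p q r hij hjk hpq hqr ⟨h1, h2, h3⟩
    · rintro i j k p q r hij hjk hpq hqr ⟨h1, h2, h3⟩
      rcases Finset.mem_insert.mp h1 with h1 | h1
      · simp at h1
      rcases Finset.mem_insert.mp h2 with h2 | h2
      · simp at h2
      rcases Finset.mem_insert.mp h3 with h3 | h3
      · simp at h3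
      exact hE i j k p q r hij hjk hpq hqr ⟨h1, h2, h3⟩
  have := hmax _ hface (Finset.subset_insert _ _)
  rw [this]
  exact Finset.mem_insert_self _ _
end

section
/- With Δ the simplicial complex on {x_{i,j}, y_{i,j}} defined by forbidding divisibility by the monomial families A, B, C, D, E, every facet of Δ contains at least two x-vertices. -/
/-- Adjoining `x_{a,n}` (with `m-1 ≤ a ≤ m`) to a face stays a face, provided no
`x_{j,k}` with `j > a` and `k < n` is present. -/
lemma face_insert_x (m n a : ℕ) (F : Finset V) (hF : IsFace m n F)
    (ha1 : 1 ≤ a) (ham : a ≤ m) (ham2 : m ≤ a + 1) (hn : 1 ≤ n)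
    (hA : ∀ j k, (true, j, k) ∈ F → a < j → n ≤ k) :
    IsFace m n (insert (true, a, n) F) := by
  obtain ⟨hG, hAx, hB, hC, hD, hE⟩ := hF
  refine ⟨?_, ?_, ?_, ?_, ?_, ?_⟩
  · intro v hv
    rcases Finset.mem_insert.mp hv with h | h
    · subst h; exact ⟨ha1, ham, hn, le_refl n⟩
    · exact hG v h
  · intro i j k l hij hkl ⟨h1, h2⟩
    rcases Finset.mem_insert.mp h1 with h1 | h1 <;>
      rcases Finset.mem_insert.mp h2 with h2 | h2
    · simp only [Prod.mk.injEq] at h1 h2; omega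
    · simp only [Prod.mk.injEq] at h1
      have := hA j k h2 (by omega)
      omega
    · simp only [Prod.mk.injEq] at h2
      have := hG _ h1
      simp only [InGrid] at this
      omega
    · exact hAx i j k l hij hkl ⟨h1, h2⟩
  · intro i j k l hij hkl ⟨h1, h2⟩
    rcases Finset.mem_insert.mp h2 with h2 | h2
    · simp only [Prod.mk.injEq] at h2; exact absurd h2.1 (by simp)
    rcases Finset.mem_insert.mp h1 with h1 | h1
    · simp only [Prod.mk.injEq] at h1
      have := hG _ h2
      simp only [InGrid] at this
      omega
    · exact hB i j k l hij hkl ⟨h1, h2⟩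
  · intro i j k p q r hij hjk hpq hqr ⟨h1, h2, h3⟩
    rcases Finset.mem_insert.mp h2 with h2 | h2
    · simp only [Prod.mk.injEq] at h2; exact absurd h2.1 (by simp)
    rcases Finset.mem_insert.mp h3 with h3 | h3
    · simp only [Prod.mk.injEq] at h3; exact absurd h3.1 (by simp)
    rcases Finset.mem_insert.mp h1 with h1 | h1
    · simp only [Prod.mk.injEq] at h1
      have := hG _ h2
      simp only [InGrid] at this
      omega
    · exact hC i j k p q r hij hjk hpq hqr ⟨h1, h2, h3⟩
  · intro i j k p q r hij hjk hpq hqr ⟨h1, h2, h3⟩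
    rcases Finset.mem_insert.mp h2 with h2 | h2
    · simp only [Prod.mk.injEq] at h2; exact absurd h2.1 (by simp)
    rcases Finset.mem_insert.mp h3 with h3 | h3
    · simp only [Prod.mk.injEq] at h3; exact absurd h3.1 (by simp)
    rcases Finset.mem_insert.mp h1 with h1 | h1
    · simp only [Prod.mk.injEq] at h1
      have := hG _ h3
      simp only [InGrid] at this
      omega
    · exact hD i j k p q r hij hjk hpq hqr ⟨h1, h2, h3⟩
  · intro i j k p q r hij hjk hpq hqr ⟨h1, h2, h3⟩
    rcases Finset.mem_insert.mp h1 with h1 | h1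
    · simp only [Prod.mk.injEq] at h1; exact absurd h1.1 (by simp)
    rcases Finset.mem_insert.mp h2 with h2 | h2
    · simp only [Prod.mk.injEq] at h2; exact absurd h2.1 (by simp)
    rcases Finset.mem_insert.mp h3 with h3 | h3
    · simp only [Prod.mk.injEq] at h3; exact absurd h3.1 (by simp)
    exact hE i j k p q r hij hjk hpq hqr ⟨h1, h2, h3⟩

theorem facet_two_x_vertices (m n : ℕ) (hm : 2 ≤ m) (hmn : m ≤ n) (F : Finset V)
    (hF : IsFacet m n F) : 2 ≤ (F.filter fun v => v.1 = true).card := by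
  obtain ⟨hface, hmax⟩ := hF
  have hn : 1 ≤ n := by omega
  -- Step 1: (true, m, n) ∈ F
  have h1 : (true, m, n) ∈ F := by
    have hins := face_insert_x m n m F hface (by omega) le_rfl (by omega) hn
      (fun j k hjk hmj => by
        have h := hface.1 _ hjk
        simp only [InGrid] at h
        omega)
    have := hmax _ hins (Finset.subset_insert _ _)
    rw [this]
    exact Finset.mem_insert_self _ _
  by_contra hcon
  push_neg at hcon
  -- Every x-vertex in F is (m, n)
  have key : ∀ j k, (true, j, k) ∈ F → j = m ∧ k = n := by
    intro j k hjk
    by_contra hne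
    push_neg at hne
    have hpair : ({(true, m, n), (true, j, k)} : Finset V) ⊆
        F.filter fun v => v.1 = true := by
      intro v hv
      rcases Finset.mem_insert.mp hv with h | h
      · subst h; exact Finset.mem_filter.mpr ⟨h1, rfl⟩
      · rw [Finset.mem_singleton] at h; subst h
        exact Finset.mem_filter.mpr ⟨hjk, rfl⟩
    have hcard : ({(true, m, n), (true, j, k)} : Finset V).card = 2 := by
      rw [Finset.card_insert_of_notMem, Finset.card_singleton]
      simp only [Finset.mem_singleton, Prod.mk.injEq, true_and]
      rintro ⟨rfl, rfl⟩
      exact hne rfl rfl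
    have := Finset.card_le_card hpair
    omega
  -- Adjoin x_{m-1, n}
  have hins := face_insert_x m n (m - 1) F hface (by omega) (by omega) (by omega) hn
    (fun j k hjk hj => by
      have := key j k hjk
      omega)
  have heq := hmax _ hins (Finset.subset_insert _ _)
  have hmem : (true, m - 1, n) ∈ F := by
    rw [heq]; exact Finset.mem_insert_self _ _
  have := key _ _ hmem
  omega
end

section
/- Let F be a facet of the complex Δ (defined by forbidding the families A–E), and let x_{i,j} = μ(F) be the x-vertex of F with minimal row and column indices (which exists since the x-vertices of F lie on a monotone path). Then F contains the vertices y_{i,n} and y_{m,j}. -/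
theorem facet_contains_yin_ymj (m n i j : ℕ) (hm : 2 ≤ m) (hmn : m ≤ n) (F : Finset V)
    (hF : IsFacet m n F)
    (hij : (true, i, j) ∈ F)
    (hmin : ∀ c d : ℕ, (true, c, d) ∈ F → i ≤ c ∧ j ≤ d) :
    (false, i, n) ∈ F ∧ (false, m, j) ∈ F := by
  obtain ⟨⟨hgrid, hA, hB, hC, hD, hE⟩, hmax⟩ := hF
  have hg0 := hgrid _ hij
  simp only [InGrid] at hg0
  obtain ⟨hi1, him, hj1, hjn⟩ := hg0
  -- no y_{b,l} in F with b > i and l > j (rule B vs x_{i,j})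
  have P : ∀ b l : ℕ, (false, b, l) ∈ F → b ≤ i ∨ l ≤ j := by
    intro b l h
    by_contra hc
    push_neg at hc
    exact hB i b j l hc.1 hc.2 ⟨hij, h⟩
  have key : ∀ v : V, IsFace m n (insert v F) → v ∈ F := by
    intro v hface
    have h := hmax _ hface (Finset.subset_insert _ _)
    rw [h]; exact Finset.mem_insert_self _ _
  constructor
  · apply key
    refine ⟨?_, ?_, ?_, ?_, ?_, ?_⟩
    · intro v hv
      rcases Finset.mem_insert.1 hv with rfl | hv
      · exact ⟨hi1, him, by simp; omega, le_rfl⟩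
      · exact hgrid _ hv
    · rintro a b c d hab hcd ⟨h1, h2⟩
      rcases Finset.mem_insert.1 h1 with h1 | h1
      · simp at h1
      rcases Finset.mem_insert.1 h2 with h2 | h2
      · simp at h2
      exact hA a b c d hab hcd ⟨h1, h2⟩
    · rintro a b c d hab hcd ⟨h1, h2⟩
      rcases Finset.mem_insert.1 h1 with h1 | h1
      · simp at h1
      rcases Finset.mem_insert.1 h2 with h2 | h2
      · simp only [Prod.mk.injEq] at h2
        have := hmin a c h1
        omega
      exact hB a b c d hab hcd ⟨h1, h2⟩
    · rintro a b c p q r hab hbc hpq hqr ⟨h1, h2, h3⟩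
      rcases Finset.mem_insert.1 h1 with h1 | h1
      · simp at h1
      rcases Finset.mem_insert.1 h2 with h2 | h2
      · simp only [Prod.mk.injEq] at h2
        rcases Finset.mem_insert.1 h3 with h3 | h3
        · simp only [Prod.mk.injEq] at h3; omega
        · have := hgrid _ h3
          simp only [InGrid] at this
          omega
      rcases Finset.mem_insert.1 h3 with h3 | h3
      · simp only [Prod.mk.injEq] at h3
        obtain ⟨_, e1, e2⟩ := h3
        rcases P b q h2 with h | h
        · omega
        · have := (hmin c p h1).2; omega
      exact hC a b c p q r hab hbc hpq hqr ⟨h1, h2, h3⟩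
    · rintro a b c p q r hab hbc hpq hqr ⟨h1, h2, h3⟩
      rcases Finset.mem_insert.1 h1 with h1 | h1
      · simp at h1
      rcases Finset.mem_insert.1 h2 with h2 | h2
      · simp only [Prod.mk.injEq] at h2
        have hgr := hgrid _ h1
        simp only [InGrid] at hgr
        have := (hmin a r h1).1
        omega
      rcases Finset.mem_insert.1 h3 with h3 | h3
      · simp only [Prod.mk.injEq] at h3
        have := hgrid _ h2
        simp only [InGrid] at this
        omega
      exact hD a b c p q r hab hbc hpq hqr ⟨h1, h2, h3⟩
    · rintro a b c p q r hab hbc hpq hqr ⟨h1, h2, h3⟩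
      rcases Finset.mem_insert.1 h1 with h1 | h1
      · simp only [Prod.mk.injEq] at h1
        obtain ⟨_, e1, e2⟩ := h1
        rcases Finset.mem_insert.1 h2 with h2 | h2
        · simp only [Prod.mk.injEq] at h2; omega
        rcases Finset.mem_insert.1 h3 with h3 | h3
        · simp only [Prod.mk.injEq] at h3; omega
        -- y_{b,q}, y_{c,p} ∈ F with i < b < c and p < q ≤ j; use rule D with x_{i,j}
        rcases P b q h2 with h | h
        · omega
        · exact hD i b c p q j (by omega) hbc hpq h ⟨hij, h2, h3⟩
      rcases Finset.mem_insert.1 h2 with h2 | h2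
      · simp only [Prod.mk.injEq] at h2
        have := hgrid _ h1
        simp only [InGrid] at this
        omega
      rcases Finset.mem_insert.1 h3 with h3 | h3
      · simp only [Prod.mk.injEq] at h3
        have := hgrid _ h2
        simp only [InGrid] at this
        omega
      exact hE a b c p q r hab hbc hpq hqr ⟨h1, h2, h3⟩
  · apply key
    refine ⟨?_, ?_, ?_, ?_, ?_, ?_⟩
    · intro v hv
      rcases Finset.mem_insert.1 hv with rfl | hv
      · exact ⟨by simp; omega, le_rfl, hj1, hjn⟩
      · exact hgrid _ hv
    · rintro a b c d hab hcd ⟨h1, h2⟩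
      rcases Finset.mem_insert.1 h1 with h1 | h1
      · simp at h1
      rcases Finset.mem_insert.1 h2 with h2 | h2
      · simp at h2
      exact hA a b c d hab hcd ⟨h1, h2⟩
    · rintro a b c d hab hcd ⟨h1, h2⟩
      rcases Finset.mem_insert.1 h1 with h1 | h1
      · simp at h1
      rcases Finset.mem_insert.1 h2 with h2 | h2
      · simp only [Prod.mk.injEq] at h2
        have := hmin a c h1
        omega
      exact hB a b c d hab hcd ⟨h1, h2⟩
    · rintro a b c p q r hab hbc hpq hqr ⟨h1, h2, h3⟩
      rcases Finset.mem_insert.1 h1 with h1 | h1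
      · simp at h1
      rcases Finset.mem_insert.1 h2 with h2 | h2
      · simp only [Prod.mk.injEq] at h2
        have := (hmin c p h1).2
        omega
      rcases Finset.mem_insert.1 h3 with h3 | h3
      · simp only [Prod.mk.injEq] at h3
        have := hgrid _ h2
        simp only [InGrid] at this
        omega
      exact hC a b c p q r hab hbc hpq hqr ⟨h1, h2, h3⟩
    · rintro a b c p q r hab hbc hpq hqr ⟨h1, h2, h3⟩
      rcases Finset.mem_insert.1 h1 with h1 | h1
      · simp at h1
      rcases Finset.mem_insert.1 h2 with h2 | h2
      · simp only [Prod.mk.injEq] at h2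
        rcases Finset.mem_insert.1 h3 with h3 | h3
        · simp only [Prod.mk.injEq] at h3; omega
        · have := hgrid _ h3
          simp only [InGrid] at this
          omega
      rcases Finset.mem_insert.1 h3 with h3 | h3
      · simp only [Prod.mk.injEq] at h3
        obtain ⟨_, e1, e2⟩ := h3
        rcases P b q h2 with h | h
        · have := (hmin a r h1).1; omega
        · omega
      exact hD a b c p q r hab hbc hpq hqr ⟨h1, h2, h3⟩
    · rintro a b c p q r hab hbc hpq hqr ⟨h1, h2, h3⟩
      rcases Finset.mem_insert.1 h1 with h1 | h1
      · simp only [Prod.mk.injEq] at h1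
        rcases Finset.mem_insert.1 h2 with h2 | h2
        · simp only [Prod.mk.injEq] at h2; omega
        · have := hgrid _ h2
          simp only [InGrid] at this
          omega
      rcases Finset.mem_insert.1 h2 with h2 | h2
      · simp only [Prod.mk.injEq] at h2
        rcases Finset.mem_insert.1 h3 with h3 | h3
        · simp only [Prod.mk.injEq] at h3; omega
        · have := hgrid _ h3
          simp only [InGrid] at this
          omega
      rcases Finset.mem_insert.1 h3 with h3 | h3
      · simp only [Prod.mk.injEq] at h3
        obtain ⟨_, e1, e2⟩ := h3
        rcases P b q h2 with h | h
        · exact hC a b i j q r hab (by omega) (by omega) hqr ⟨hij, h2, h1⟩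
        · omega
      exact hE a b c p q r hab hbc hpq hqr ⟨h1, h2, h3⟩
end

section
/- The simplicial complex Δ_{LT(J)} is pure: all its facets have the same cardinality 2(m+n) - 2, hence dimension 2(m+n) - 3. -/
namespace PurityProof
set_option linter.unusedSectionVars false

open Finset

/-! ### max/min with default -/

def dmax (s : Finset ℕ) (d : ℕ) : ℕ := if h : s.Nonempty then s.max' h else d
def dmin (s : Finset ℕ) (d : ℕ) : ℕ := if h : s.Nonempty then s.min' h else d

lemma le_dmax {s : Finset ℕ} {a : ℕ} (ha : a ∈ s) (d : ℕ) : a ≤ dmax s d := by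
  rw [dmax, dif_pos ⟨a, ha⟩]; exact Finset.le_max' _ _ ha

lemma dmax_le {s : Finset ℕ} {c d : ℕ} (h : ∀ a ∈ s, a ≤ c) (hd : d ≤ c) : dmax s d ≤ c := by
  rw [dmax]; split_ifs with hs
  · exact Finset.max'_le _ _ _ h
  · exact hd

lemma dmax_mem {s : Finset ℕ} (hs : s.Nonempty) (d : ℕ) : dmax s d ∈ s := by
  rw [dmax, dif_pos hs]; exact Finset.max'_mem _ _

lemma dmax_of_empty {s : Finset ℕ} (hs : ¬ s.Nonempty) (d : ℕ) : dmax s d = d := by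
  rw [dmax, dif_neg hs]

lemma dmin_le {s : Finset ℕ} {a : ℕ} (ha : a ∈ s) (d : ℕ) : dmin s d ≤ a := by
  rw [dmin, dif_pos ⟨a, ha⟩]; exact Finset.min'_le _ _ ha

lemma le_dmin {s : Finset ℕ} {c d : ℕ} (h : ∀ a ∈ s, c ≤ a) (hd : c ≤ d) : c ≤ dmin s d := by
  rw [dmin]; split_ifs with hs
  · exact Finset.le_min' _ _ _ h
  · exact hd

lemma dmin_mem {s : Finset ℕ} (hs : s.Nonempty) (d : ℕ) : dmin s d ∈ s := by
  rw [dmin, dif_pos hs]; exact Finset.min'_mem _ _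

lemma dmin_of_empty {s : Finset ℕ} (hs : ¬ s.Nonempty) (d : ℕ) : dmin s d = d := by
  rw [dmin, dif_neg hs]

/-! ### generic staircase-path machinery -/

def rfun (base top' : ℕ) (e : ℕ → ℕ) (d : ℕ) : ℕ :=
  max base (dmax (((Finset.Icc base top')).filter fun i => e i ≤ d) 0)

def pathCells (r : ℕ → ℕ) (lo hi : ℕ) : Finset (ℕ × ℕ) :=
  (Finset.Icc lo hi).image fun d => (r d, d - r d)

section RFun

variable {base top' : ℕ} {e : ℕ → ℕ}

lemma rfun_ub {d i : ℕ} (h1 : base ≤ i) (h2 : i ≤ top') (h3 : e i ≤ d) :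
    i ≤ rfun base top' e d := by
  refine le_trans (le_dmax ?_ 0) (le_max_right _ _)
  simp [Finset.mem_filter, Finset.mem_Icc, h1, h2, h3]

variable (hbt : base ≤ top') (hstep : ∀ i, base ≤ i → i < top' → e i < e (i+1))

include hbt hstep in
lemma emono {i j : ℕ} (hi : base ≤ i) (hij : i ≤ j) (hj : j ≤ top') : e i ≤ e j := by
  revert hj
  induction j, hij using Nat.le_induction with
  | base => exact fun _ => le_rfl
  | succ j hij ih =>
    intro hj
    have h1 : e i ≤ e j := ih (le_trans (Nat.le_succ j) hj)
    exact le_trans h1 (le_of_lt (hstep j (hi.trans hij) (by omega)))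

include hbt in
lemma rfun_mem {d : ℕ} (hd : e base ≤ d) :
    base ≤ rfun base top' e d ∧ rfun base top' e d ≤ top' ∧ e (rfun base top' e d) ≤ d := by
  have hne : (((Finset.Icc base top')).filter fun i => e i ≤ d).Nonempty :=
    ⟨base, by simp [Finset.mem_filter, Finset.mem_Icc, hbt, hd]⟩
  have hv := dmax_mem hne 0
  simp only [Finset.mem_filter, Finset.mem_Icc] at hv
  have : rfun base top' e d = dmax (((Finset.Icc base top')).filter fun i => e i ≤ d) 0 := by
    rw [rfun]; exact max_eq_right hv.1.1
  rw [this]; exact ⟨hv.1.1, hv.1.2, hv.2⟩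

lemma rfun_mono {d d' : ℕ} (hdd : d ≤ d') : rfun base top' e d ≤ rfun base top' e d' := by
  by_cases hs : (((Finset.Icc base top')).filter fun i => e i ≤ d).Nonempty
  · have hv := dmax_mem hs 0
    simp only [Finset.mem_filter, Finset.mem_Icc] at hv
    exact max_le (le_max_left _ _) (rfun_ub hv.1.1 hv.1.2 (hv.2.trans hdd))
  · rw [rfun, dmax_of_empty hs]
    exact le_trans (by omega) (le_max_left _ _)

include hbt hstep in
lemma rfun_step {d : ℕ} (hd : e base ≤ d) : rfun base top' e (d+1) ≤ rfun base top' e d + 1 := by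
  obtain ⟨h1, h2, h3⟩ := rfun_mem hbt (e := e) (d := d+1) (hd.trans (Nat.le_succ d))
  obtain ⟨h1', -, -⟩ := rfun_mem hbt (e := e) (d := d) hd
  set i := rfun base top' e (d+1) with hi
  rcases eq_or_lt_of_le h1 with h | h
  · omega
  · have hm1 : base ≤ i - 1 := by omega
    have hm2 : i - 1 < top' := by omega
    have hst := hstep (i-1) hm1 hm2
    rw [Nat.sub_add_cancel (by omega : 1 ≤ i)] at hst
    have hle : e (i-1) ≤ d := by omega
    have := rfun_ub (top' := top') (d := d) hm1 (by omega : i - 1 ≤ top') hle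
    omega

include hbt hstep in
lemma rfun_add {d : ℕ} (hd : e base ≤ d) (k : ℕ) :
    rfun base top' e (d+k) ≤ rfun base top' e d + k := by
  induction k with
  | zero => simp
  | succ k ih =>
    have h1 : rfun base top' e (d+k+1) ≤ rfun base top' e (d+k) + 1 :=
      rfun_step hbt hstep (hd.trans (Nat.le_add_right d k))
    have h2 : d + (k+1) = d + k + 1 := by omega
    rw [h2]
    omega

include hbt hstep in
lemma rfun_eq {i d : ℕ} (h1 : base ≤ i) (h2 : i ≤ top') (h3 : e i ≤ d)
    (h4 : i < top' → d < e (i+1)) : rfun base top' e d = i := by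
  have hd : e base ≤ d := (emono hbt hstep le_rfl h1 h2).trans h3
  obtain ⟨g1, g2, g3⟩ := rfun_mem hbt (e := e) hd
  have hub := rfun_ub h1 h2 h3 (base := base) (top' := top')
  rcases eq_or_lt_of_le hub with h | h
  · omega
  · exfalso
    have hi : i < top' := lt_of_lt_of_le h g2
    have : e (i+1) ≤ e (rfun base top' e d) := emono hbt hstep (by omega) h g2
    have := h4 hi
    omega

end RFun

section PC

variable {base top' : ℕ} {e : ℕ → ℕ} {lo hi : ℕ}
variable (hbt : base ≤ top') (hstep : ∀ i, base ≤ i → i < top' → e i < e (i+1))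
variable (hei : ∀ i, base ≤ i → i ≤ e i)
variable (hblo : e base ≤ lo)

include hbt hstep hei hblo in
lemma pc_spec {c : ℕ × ℕ} (hc : c ∈ pathCells (rfun base top' e) lo hi) :
    ∃ d, lo ≤ d ∧ d ≤ hi ∧ c.1 = rfun base top' e d ∧ c.2 = d - rfun base top' e d ∧
      rfun base top' e d ≤ d ∧ base ≤ rfun base top' e d ∧ rfun base top' e d ≤ top' ∧
      e (rfun base top' e d) ≤ d := by
  simp only [pathCells, Finset.mem_image, Finset.mem_Icc] at hc
  obtain ⟨d, ⟨hd1, hd2⟩, hd3⟩ := hc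
  obtain ⟨g1, g2, g3⟩ := rfun_mem hbt (e := e) (d := d) (hblo.trans hd1)
  refine ⟨d, hd1, hd2, ?_, ?_, ?_, g1, g2, g3⟩
  · rw [← hd3]
  · rw [← hd3]
  · exact le_trans (hei _ g1) g3

include hbt hstep hei hblo in
lemma pc_diag {c : ℕ × ℕ} (hc : c ∈ pathCells (rfun base top' e) lo hi) :
    lo ≤ c.1 + c.2 ∧ c.1 + c.2 ≤ hi ∧ c.1 = rfun base top' e (c.1 + c.2) ∧
      base ≤ c.1 ∧ c.1 ≤ top' ∧ e c.1 ≤ c.1 + c.2 := by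
  obtain ⟨d, h1, h2, h3, h4, h5, h6, h7, h8⟩ := pc_spec hbt hstep hei hblo hc
  have hd : c.1 + c.2 = d := by omega
  rw [hd]
  exact ⟨h1, h2, h3, by omega, by omega, by rw [h3]; exact h8⟩

variable (hrlo : rfun base top' e lo = base) (hrhi : rfun base top' e hi = top')

include hbt hstep hei hblo hrlo in
lemma pc_col_lb {c : ℕ × ℕ} (hc : c ∈ pathCells (rfun base top' e) lo hi) :
    lo - base ≤ c.2 := by
  obtain ⟨d, h1, h2, h3, h4, h5, h6, -, -⟩ := pc_spec hbt hstep hei hblo hc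
  have : rfun base top' e d ≤ rfun base top' e lo + (d - lo) := by
    have := rfun_add hbt hstep (d := lo) hblo (d - lo)
    rwa [Nat.add_sub_cancel' h1] at this
  rw [hrlo] at this
  omega

include hbt hstep hei hblo hrhi in
lemma pc_col_ub {c : ℕ × ℕ} (hc : c ∈ pathCells (rfun base top' e) lo hi) :
    c.2 ≤ hi - top' := by
  obtain ⟨d, h1, h2, h3, h4, h5, h6, -, -⟩ := pc_spec hbt hstep hei hblo hc
  have : rfun base top' e hi ≤ rfun base top' e d + (hi - d) := by
    have := rfun_add hbt hstep (d := d) (hblo.trans h1) (hi - d)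
    rwa [Nat.add_sub_cancel' h2] at this
  rw [hrhi] at this
  omega

include hbt hstep hei hblo in
lemma pc_PP {c c' : ℕ × ℕ} (hc : c ∈ pathCells (rfun base top' e) lo hi)
    (hc' : c' ∈ pathCells (rfun base top' e) lo hi) (hrow : c.1 < c'.1) : c.2 ≤ c'.2 := by
  obtain ⟨d, h1, h2, h3, h4, h5, -, -, -⟩ := pc_spec hbt hstep hei hblo hc
  obtain ⟨d', g1, g2, g3, g4, g5, -, -, -⟩ := pc_spec hbt hstep hei hblo hc'
  have hdd : d < d' := by
    by_contra hcon
    have := rfun_mono (base := base) (top' := top') (e := e) (le_of_not_gt hcon)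
    omega
  have : rfun base top' e d' ≤ rfun base top' e d + (d' - d) := by
    have := rfun_add hbt hstep (d := d) (hblo.trans h1) (d' - d)
    rwa [Nat.add_sub_cancel' (le_of_lt hdd)] at this
  omega

include hbt hstep hei hblo in
lemma pc_next {c : ℕ × ℕ} (hc : c ∈ pathCells (rfun base top' e) lo hi)
    (hlt : c.1 < top') : c.1 + c.2 < e (c.1 + 1) := by
  obtain ⟨h1, h2, h3, h4, h5, h6⟩ := pc_diag hbt hstep hei hblo hc
  by_contra hcon
  have := rfun_ub (base := base) (top' := top') (e := e) (d := c.1 + c.2)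
    (by omega) (by omega) (le_of_not_gt hcon)
  omega

include hbt hstep hei hblo in
lemma pc_card (hlh : lo ≤ hi) :
    (pathCells (rfun base top' e) lo hi).card = hi + 1 - lo := by
  rw [pathCells, Finset.card_image_of_injOn, Nat.card_Icc]
  intro d hd d' hd' heq
  simp only [Finset.mem_coe, Finset.mem_Icc] at hd hd'
  obtain ⟨-, -, h3⟩ := rfun_mem hbt (e := e) (d := d) (hblo.trans hd.1)
  obtain ⟨-, -, h3'⟩ := rfun_mem hbt (e := e) (d := d') (hblo.trans hd'.1)
  have e1 : rfun base top' e d = rfun base top' e d' := congrArg Prod.fst heq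
  have e2 : d - rfun base top' e d = d' - rfun base top' e d' := congrArg Prod.snd heq
  have l1 : rfun base top' e d ≤ d := le_trans (hei _ (rfun_mem hbt (e:=e) (hblo.trans hd.1)).1) h3
  have l2 : rfun base top' e d' ≤ d' := le_trans (hei _ (rfun_mem hbt (e:=e) (hblo.trans hd'.1)).1) h3'
  omega

include hbt hstep hei hblo in
lemma pc_mem {i j : ℕ} (h1 : base ≤ i) (h2 : i ≤ top') (h3 : e i ≤ i + j)
    (h4 : i < top' → i + j < e (i+1)) (h5 : lo ≤ i + j) (h6 : i + j ≤ hi) :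
    (i, j) ∈ pathCells (rfun base top' e) lo hi := by
  have := rfun_eq hbt hstep h1 h2 h3 h4
  simp only [pathCells, Finset.mem_image, Finset.mem_Icc]
  exact ⟨i + j, ⟨h5, h6⟩, by rw [this]; simp⟩

end PC
/-! ### The construction -/

noncomputable section Defs
open scoped Classical

def XF (F : Finset V) : Finset (ℕ × ℕ) := (F.filter fun v => v.1 = true).image Prod.snd
def YF (F : Finset V) : Finset (ℕ × ℕ) := (F.filter fun v => v.1 = false).image Prod.snd

def bcol (F : Finset V) (n : ℕ) : ℕ := dmin ((XF F).image Prod.snd) n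

def Y1 (F : Finset V) (n : ℕ) : Finset (ℕ × ℕ) :=
  (YF F).filter fun y => (∃ z ∈ YF F, y.1 < z.1 ∧ z.2 < y.2) ∨ y.1 = 1 ∨ bcol F n < y.2

def Y2 (F : Finset V) (n : ℕ) : Finset (ℕ × ℕ) := YF F \ Y1 F n

def aa (F : Finset V) (n : ℕ) : ℕ := max 1 (dmax ((Y1 F n).image Prod.fst) 1)

def ss (F : Finset V) (n i : ℕ) : ℕ :=
  max 1 (dmax (((Y2 F n).filter fun y => y.1 < i).image Prod.snd) 0)

def bb (F : Finset V) (m n : ℕ) : ℕ := ss F n (m+1)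

def ww (F : Finset V) (n i : ℕ) : ℕ :=
  dmin (((Y1 F n).filter fun y => i ≤ y.1).image Prod.snd) n

def gx (F : Finset V) (m n i : ℕ) : ℕ :=
  max (bb F m n) (dmax (((XF F).filter fun x => x.1 < i).image Prod.snd) 0)

def eP (F : Finset V) (m n i : ℕ) : ℕ := i + gx F m n i
def eU (F : Finset V) (n i : ℕ) : ℕ := i + (if i ≤ 1 then 1 else ww F n i)
def eV (F : Finset V) (n i : ℕ) : ℕ := i + ss F n i

def rP (F : Finset V) (m n : ℕ) : ℕ → ℕ := rfun (aa F n) m (eP F m n)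
def rU (F : Finset V) (n : ℕ) : ℕ → ℕ := rfun 1 (aa F n) (eU F n)
def rV (F : Finset V) (m n : ℕ) : ℕ → ℕ := rfun 2 m (eV F n)

def Pcells (F : Finset V) (m n : ℕ) : Finset (ℕ × ℕ) :=
  pathCells (rP F m n) (aa F n + bb F m n) (m + n)
def Ucells (F : Finset V) (m n : ℕ) : Finset (ℕ × ℕ) :=
  pathCells (rU F n) 2 (aa F n + n)
def Vcells (F : Finset V) (m n : ℕ) : Finset (ℕ × ℕ) :=
  pathCells (rV F m n) 3 (m + bb F m n)

def GG (F : Finset V) (m n : ℕ) : Finset V :=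
  ((Pcells F m n).image fun c => (true, c)) ∪
    (((Ucells F m n) ∪ (Vcells F m n)).image fun c => (false, c))

end Defs

/-! ### basic membership lemmas -/

lemma mem_XF {F : Finset V} {i j : ℕ} : (i, j) ∈ XF F ↔ (true, i, j) ∈ F := by
  constructor
  · rintro h
    simp only [XF, Finset.mem_image, Finset.mem_filter] at h
    obtain ⟨⟨b, p⟩, ⟨hv, hb⟩, hp⟩ := h
    cases hb; cases hp; exact hv
  · intro h
    simp only [XF, Finset.mem_image, Finset.mem_filter]
    exact ⟨(true, i, j), ⟨h, rfl⟩, rfl⟩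

lemma mem_YF {F : Finset V} {i j : ℕ} : (i, j) ∈ YF F ↔ (false, i, j) ∈ F := by
  constructor
  · rintro h
    simp only [YF, Finset.mem_image, Finset.mem_filter] at h
    obtain ⟨⟨b, p⟩, ⟨hv, hb⟩, hp⟩ := h
    cases hb; cases hp; exact hv
  · intro h
    simp only [YF, Finset.mem_image, Finset.mem_filter]
    exact ⟨(false, i, j), ⟨h, rfl⟩, rfl⟩

lemma mem_XF' {F : Finset V} {x : ℕ × ℕ} (h : x ∈ XF F) : (true, x) ∈ F := by
  obtain ⟨i, j⟩ := x; exact mem_XF.mp h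

lemma mem_YF' {F : Finset V} {y : ℕ × ℕ} (h : y ∈ YF F) : (false, y) ∈ F := by
  obtain ⟨i, j⟩ := y; exact mem_YF.mp h

section Face

variable {m n : ℕ} {F : Finset V} (hf : IsFace m n F) (hm : 2 ≤ m) (hmn : m ≤ n)

include hf

lemma Xgrid {x : ℕ × ℕ} (h : x ∈ XF F) : 1 ≤ x.1 ∧ x.1 ≤ m ∧ 1 ≤ x.2 ∧ x.2 ≤ n :=
  hf.1 _ (mem_XF' h)

lemma Ygrid {y : ℕ × ℕ} (h : y ∈ YF F) : 1 ≤ y.1 ∧ y.1 ≤ m ∧ 1 ≤ y.2 ∧ y.2 ≤ n :=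
  hf.1 _ (mem_YF' h)

lemma fA {x x' : ℕ × ℕ} (h : x ∈ XF F) (h' : x' ∈ XF F) (h1 : x.1 < x'.1)
    (h2 : x'.2 < x.2) : False :=
  hf.2.1 x.1 x'.1 x'.2 x.2 h1 h2 ⟨mem_XF' h, mem_XF' h'⟩

lemma fB {x y : ℕ × ℕ} (h : x ∈ XF F) (h' : y ∈ YF F) (h1 : x.1 < y.1)
    (h2 : x.2 < y.2) : False :=
  hf.2.2.1 x.1 y.1 x.2 y.2 h1 h2 ⟨mem_XF' h, mem_YF' h'⟩

lemma fC {x yq yr : ℕ × ℕ} (h : x ∈ XF F) (hq : yq ∈ YF F) (hr : yr ∈ YF F)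
    (h1 : yr.1 < yq.1) (h2 : yq.1 ≤ x.1) (h3 : x.2 < yq.2) (h4 : yq.2 < yr.2) : False :=
  hf.2.2.2.1 yr.1 yq.1 x.1 x.2 yq.2 yr.2 h1 h2 h3 h4 ⟨mem_XF' h, mem_YF' hq, mem_YF' hr⟩

lemma fD {x yq yp : ℕ × ℕ} (h : x ∈ XF F) (hq : yq ∈ YF F) (hp : yp ∈ YF F)
    (h1 : x.1 < yq.1) (h2 : yq.1 < yp.1) (h3 : yp.2 < yq.2) (h4 : yq.2 ≤ x.2) : False :=
  hf.2.2.2.2.1 x.1 yq.1 yp.1 yp.2 yq.2 x.2 h1 h2 h3 h4 ⟨mem_XF' h, mem_YF' hq, mem_YF' hp⟩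

lemma fE {yr yq yp : ℕ × ℕ} (hr : yr ∈ YF F) (hq : yq ∈ YF F) (hp : yp ∈ YF F)
    (h1 : yr.1 < yq.1) (h2 : yq.1 < yp.1) (h3 : yp.2 < yq.2) (h4 : yq.2 < yr.2) : False :=
  hf.2.2.2.2.2 yr.1 yq.1 yp.1 yp.2 yq.2 yr.2 h1 h2 h3 h4 ⟨mem_YF' hr, mem_YF' hq, mem_YF' hp⟩

/-- every x–column is at least the column of any "bottom" y. -/
lemma xcol_lb {yb yt x : ℕ × ℕ} (hb : yb ∈ YF F) (ht : yt ∈ YF F) (h1 : yt.1 < yb.1)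
    (h2 : yb.2 < yt.2) (hx : x ∈ XF F) : yb.2 ≤ x.2 := by
  by_contra hcon
  rcases lt_or_ge x.1 yb.1 with h | h
  · exact fB hf hx hb h (by omega)
  · exact fC hf hx hb ht h1 h (by omega) h2

/-- every x–row is at least the row of any "top" y. -/
lemma xrow_lb {yb yt x : ℕ × ℕ} (hb : yb ∈ YF F) (ht : yt ∈ YF F) (h1 : yt.1 < yb.1)
    (h2 : yb.2 < yt.2) (hx : x ∈ XF F) : yt.1 ≤ x.1 := by
  by_contra hcon
  have hcol : yt.2 ≤ x.2 := by
    by_contra hc2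
    exact fB hf hx ht (by omega) (by omega)
  exact fD hf hx ht hb (by omega) h1 h2 hcol

lemma bcol_le {x : ℕ × ℕ} (hx : x ∈ XF F) : bcol F n ≤ x.2 :=
  dmin_le (Finset.mem_image_of_mem _ hx) n

omit hf in
lemma bcol_of_empty (hX : XF F = ∅) : bcol F n = n := by
  rw [bcol, hX]; exact dmin_of_empty (by simp) n

lemma one_le_bcol (hm : 2 ≤ m) (hmn : m ≤ n) : 1 ≤ bcol F n := by
  rcases (XF F).eq_empty_or_nonempty with h | h
  · rw [bcol_of_empty h]; omega
  · obtain ⟨x, hx⟩ := h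
    have h1 := Xgrid hf hx
    have h2 := dmin_mem (s := (XF F).image Prod.snd) (Finset.image_nonempty.mpr ⟨x, hx⟩) n
    simp only [Finset.mem_image] at h2
    obtain ⟨x', hx', hcol⟩ := h2
    have := Xgrid hf hx'
    rw [bcol]; omega

end Face
section Struct

variable {m n : ℕ} {F : Finset V} (hf : IsFace m n F) (hm : 2 ≤ m) (hmn : m ≤ n)

lemma mem_Y1 {y : ℕ × ℕ} :
    y ∈ Y1 F n ↔ y ∈ YF F ∧
      ((∃ z ∈ YF F, y.1 < z.1 ∧ z.2 < y.2) ∨ y.1 = 1 ∨ bcol F n < y.2) := by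
  simp [Y1]

lemma mem_Y2 {y : ℕ × ℕ} :
    y ∈ Y2 F n ↔ y ∈ YF F ∧
      ¬((∃ z ∈ YF F, y.1 < z.1 ∧ z.2 < y.2) ∨ y.1 = 1 ∨ bcol F n < y.2) := by
  rw [Y2, Finset.mem_sdiff, mem_Y1]
  constructor
  · rintro ⟨h1, h2⟩; exact ⟨h1, fun hc => h2 ⟨h1, hc⟩⟩
  · rintro ⟨h1, h2⟩; exact ⟨h1, fun hc => h2 hc.2⟩

include hf

lemma Y2_row {y : ℕ × ℕ} (hy : y ∈ Y2 F n) : 2 ≤ y.1 := by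
  rw [mem_Y2] at hy
  have := Ygrid hf hy.1
  push_neg at hy
  have := hy.2.2.1
  omega

lemma Y2_col_le_bcol {y : ℕ × ℕ} (hy : y ∈ Y2 F n) : y.2 ≤ bcol F n := by
  rw [mem_Y2] at hy
  push_neg at hy
  exact hy.2.2.2

lemma Y2_notTop {y : ℕ × ℕ} (hy : y ∈ Y2 F n) :
    ¬ ∃ z ∈ YF F, y.1 < z.1 ∧ z.2 < y.2 := by
  rw [mem_Y2] at hy
  push_neg at hy
  exact fun ⟨z, hz, h1, h2⟩ => absurd h2 (not_lt.mpr (hy.2.1 z hz h1))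

lemma Y2_mem_YF {y : ℕ × ℕ} (hy : y ∈ Y2 F n) : y ∈ YF F := (mem_Y2.mp hy).1
omit hf in
lemma Y1_mem_YF {y : ℕ × ℕ} (hy : y ∈ Y1 F n) : y ∈ YF F := (mem_Y1.mp hy).1

lemma Y2_nodesc {z z' : ℕ × ℕ} (hz : z ∈ Y2 F n) (hz' : z' ∈ Y2 F n)
    (h : z.1 < z'.1) : z.2 ≤ z'.2 := by
  by_contra hcon
  exact Y2_notTop hf hz ⟨z', Y2_mem_YF hf hz', h, by omega⟩

lemma Y1_nodesc (hm : 2 ≤ m) (hmn : m ≤ n) {w w' : ℕ × ℕ} (hw : w ∈ Y1 F n)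
    (hw' : w' ∈ Y1 F n) (h : w.1 < w'.1) : w.2 ≤ w'.2 := by
  by_contra hcon
  have hwY := Y1_mem_YF hw
  have hw'Y := Y1_mem_YF hw'
  rcases (mem_Y1.mp hw').2 with ⟨u, hu, h1, h2⟩ | h1 | h1
  · -- w' is a top with bottom u : E-chain w ≻ w' ≻ u
    exact fE hf hwY hw'Y hu h h1 h2 (by omega)
  · have := Ygrid hf hwY; omega
  · -- bcol < w'.2 but w' is a bottom (w is above-right)
    rcases (XF F).eq_empty_or_nonempty with hX | ⟨x, hx⟩
    · have := Ygrid hf hw'Y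
      rw [bcol_of_empty hX] at h1
      omega
    · -- take the x attaining the minimal column
      have h2 := dmin_mem (s := (XF F).image Prod.snd) (Finset.image_nonempty.mpr ⟨x, hx⟩) n
      simp only [Finset.mem_image] at h2
      obtain ⟨x', hx', hcol⟩ := h2
      have h3 : w'.2 ≤ x'.2 := xcol_lb hf hw'Y hwY h (by omega) hx'
      rw [bcol] at h1
      omega

lemma Y1_row_le_aa {y : ℕ × ℕ} (hy : y ∈ Y1 F n) : y.1 ≤ aa F n := by
  refine le_trans (le_dmax (Finset.mem_image_of_mem _ hy) 1) (le_max_right _ _)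

omit hf in
lemma one_le_aa : 1 ≤ aa F n := le_max_left _ _

lemma aa_le_m (hm : 2 ≤ m) : aa F n ≤ m := by
  rw [aa]
  refine max_le (by omega) (dmax_le ?_ (by omega))
  intro a ha
  simp only [Finset.mem_image] at ha
  obtain ⟨y, hy, hcol⟩ := ha
  have := Ygrid hf (Y1_mem_YF hy)
  omega

lemma aa_le_xrow {x : ℕ × ℕ} (hx : x ∈ XF F) : aa F n ≤ x.1 := by
  have hx1 := (Xgrid hf hx).1
  rw [aa]
  refine max_le (by omega) (dmax_le ?_ (by omega))
  intro a ha
  simp only [Finset.mem_image] at ha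
  obtain ⟨y, hy, hcol⟩ := ha
  subst hcol
  rcases (mem_Y1.mp hy).2 with ⟨u, hu, h1, h2⟩ | h1 | h1
  · exact xrow_lb hf hu (Y1_mem_YF hy) h1 h2 hx
  · omega
  · -- col > bcol forces row above every x
    by_contra hcon
    -- find x₂ with minimal row and column ≤ bcol
    rcases (XF F).eq_empty_or_nonempty with hX | hne
    · rw [hX] at hx; simp at hx
    · have h2 := dmin_mem (s := (XF F).image Prod.snd) (Finset.image_nonempty.mpr hne) n
      simp only [Finset.mem_image] at h2
      obtain ⟨x0, hx0, hcol0⟩ := h2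
      rw [← bcol] at hcol0
      -- choose among x, x0 one with row < y.1 and col ≤ bcol
      rcases le_or_gt x0.1 x.1 with hr | hr
      · -- x0 is above y as well (row x0 ≤ row x < y.1)
        exact fB hf hx0 (Y1_mem_YF hy) (by omega) (by omega)
      · -- row x < row x0 : then col x ≤ col x0 = bcol by staircase
        have : ¬ x0.2 < x.2 := fun hc => fA hf hx hx0 hr hc
        exact fB hf hx (Y1_mem_YF hy) (by omega) (by omega)

lemma aa_attain (h2 : 2 ≤ aa F n) : ∃ w ∈ Y1 F n, w.1 = aa F n := by
  rw [aa] at h2 ⊢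
  rcases ((Y1 F n).image Prod.fst).eq_empty_or_nonempty with he | hne
  · rw [he] at h2 ⊢
    rw [dmax_of_empty (by simp)] at h2 ⊢
    omega
  · have hv := dmax_mem hne 1
    simp only [Finset.mem_image] at hv
    obtain ⟨w, hw, hcol⟩ := hv
    refine ⟨w, hw, ?_⟩
    rcases le_or_gt (dmax ((Y1 F n).image Prod.fst) 1) 1 with hd | hd
    · rw [max_eq_left hd] at h2; omega
    · rw [max_eq_right (by omega : 1 ≤ dmax ((Y1 F n).image Prod.fst) 1)]
      exact hcol

end Struct
section Params

variable {m n : ℕ} {F : Finset V} (hf : IsFace m n F) (hm : 2 ≤ m) (hmn : m ≤ n)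

omit hf hm hmn in
lemma one_le_ss {i : ℕ} : 1 ≤ ss F n i := le_max_left _ _

omit hf hm hmn in
lemma ss_mono {i j : ℕ} (hij : i ≤ j) : ss F n i ≤ ss F n j := by
  refine max_le (le_max_left _ _) ?_
  refine le_trans (dmax_le ?_ (Nat.zero_le _)) (le_max_right _ _)
  intro a ha
  simp only [Finset.mem_image, Finset.mem_filter] at ha
  obtain ⟨y, ⟨hy, hrow⟩, hcol⟩ := ha
  refine le_dmax ?_ 0
  simp only [Finset.mem_image, Finset.mem_filter]
  exact ⟨y, ⟨hy, by omega⟩, hcol⟩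

include hf in
lemma ss_le_col {y : ℕ × ℕ} (hy : y ∈ Y2 F n) : ss F n y.1 ≤ y.2 := by
  have h1 := Ygrid hf (Y2_mem_YF hf hy)
  refine max_le (by omega) (dmax_le ?_ (by omega))
  intro a ha
  simp only [Finset.mem_image, Finset.mem_filter] at ha
  obtain ⟨z, ⟨hz, hrow⟩, hcol⟩ := ha
  have := Y2_nodesc hf hz hy hrow
  omega

omit hf hm hmn in
lemma col_le_ss {y : ℕ × ℕ} (hy : y ∈ Y2 F n) {i : ℕ} (h : y.1 < i) : y.2 ≤ ss F n i := by
  refine le_trans (le_dmax ?_ 0) (le_max_right _ _)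
  simp only [Finset.mem_image, Finset.mem_filter]
  exact ⟨y, ⟨hy, h⟩, rfl⟩

include hf in
lemma col_le_bb {y : ℕ × ℕ} (hy : y ∈ Y2 F n) : y.2 ≤ bb F m n := by
  have := Ygrid hf (Y2_mem_YF hf hy)
  exact col_le_ss hy (by omega)

omit hf hm hmn in
lemma one_le_bb : 1 ≤ bb F m n := one_le_ss

include hf hm hmn in
lemma bb_le_n : bb F m n ≤ n := by
  refine max_le (by omega) (dmax_le ?_ (by omega))
  intro a ha
  simp only [Finset.mem_image, Finset.mem_filter] at ha
  obtain ⟨y, ⟨hy, _⟩, hcol⟩ := ha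
  have := Ygrid hf (Y2_mem_YF hf hy)
  omega

include hf in
lemma bb_le_xcol {x : ℕ × ℕ} (hx : x ∈ XF F) : bb F m n ≤ x.2 := by
  have h1 := (Xgrid hf hx).2.2.1
  refine max_le (by omega) (dmax_le ?_ (by omega))
  intro a ha
  simp only [Finset.mem_image, Finset.mem_filter] at ha
  obtain ⟨y, ⟨hy, _⟩, hcol⟩ := ha
  have := Y2_col_le_bcol hf hy
  have := bcol_le hf hx (n := n)
  omega

omit hf hm hmn in
lemma ww_le {y : ℕ × ℕ} (hy : y ∈ Y1 F n) {i : ℕ} (h : i ≤ y.1) : ww F n i ≤ y.2 := by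
  refine dmin_le ?_ n
  simp only [Finset.mem_image, Finset.mem_filter]
  exact ⟨y, ⟨hy, h⟩, rfl⟩

omit hf hm hmn in
lemma le_ww {i c : ℕ} (h : ∀ y ∈ Y1 F n, i ≤ y.1 → c ≤ y.2) (hn : c ≤ n) : c ≤ ww F n i := by
  refine le_dmin ?_ hn
  intro a ha
  simp only [Finset.mem_image, Finset.mem_filter] at ha
  obtain ⟨y, ⟨hy, hrow⟩, hcol⟩ := ha
  exact hcol ▸ h y hy hrow

include hf in
lemma ww_le_n {i : ℕ} : ww F n i ≤ n := by
  rcases (((Y1 F n).filter fun y => i ≤ y.1).image Prod.snd).eq_empty_or_nonempty with he | hne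
  · rw [ww, he, dmin_of_empty (by simp)]
  · have := dmin_mem hne n
    simp only [Finset.mem_image, Finset.mem_filter] at this
    obtain ⟨y, ⟨hy, _⟩, hcol⟩ := this
    have := Ygrid hf (Y1_mem_YF hy)
    rw [ww]; omega

include hf hm hmn in
lemma one_le_ww {i : ℕ} : 1 ≤ ww F n i :=
  le_ww (fun y hy _ => by have := Ygrid hf (Y1_mem_YF hy); omega) (by omega)

include hf in
lemma ww_mono {i j : ℕ} (hij : i ≤ j) : ww F n i ≤ ww F n j :=
  le_ww (fun y hy hrow => ww_le hy (le_trans hij hrow)) (ww_le_n hf)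

include hf hm hmn in
lemma Y1_col2 {y : ℕ × ℕ} (hy : y ∈ Y1 F n) (hrow : 2 ≤ y.1) : 2 ≤ y.2 := by
  rcases (mem_Y1.mp hy).2 with ⟨u, hu, h1, h2⟩ | h1 | h1
  · have := Ygrid hf hu; omega
  · omega
  · have := one_le_bcol hf hm hmn (F := F); omega

include hf in
lemma gx_mono {i j : ℕ} (hij : i ≤ j) : gx F m n i ≤ gx F m n j := by
  refine max_le (le_max_left _ _) ?_
  refine le_trans (dmax_le ?_ (Nat.zero_le _)) (le_max_right _ _)
  intro a ha
  simp only [Finset.mem_image, Finset.mem_filter] at ha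
  obtain ⟨x, ⟨hx, hrow⟩, hcol⟩ := ha
  refine le_dmax ?_ 0
  simp only [Finset.mem_image, Finset.mem_filter]
  exact ⟨x, ⟨hx, by omega⟩, hcol⟩

include hf in
lemma gx_le {i c : ℕ} (hb : bb F m n ≤ c) (h : ∀ x ∈ XF F, x.1 < i → x.2 ≤ c) :
    gx F m n i ≤ c := by
  refine max_le hb (dmax_le ?_ (by omega))
  intro a ha
  simp only [Finset.mem_image, Finset.mem_filter] at ha
  obtain ⟨x, ⟨hx, hrow⟩, hcol⟩ := ha
  exact hcol ▸ h x hx hrow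

omit hf hm hmn in
lemma gx_ge_bb {i : ℕ} : bb F m n ≤ gx F m n i := le_max_left _ _

omit hf hm hmn in
lemma le_gx {x : ℕ × ℕ} (hx : x ∈ XF F) {i : ℕ} (h : x.1 < i) : x.2 ≤ gx F m n i := by
  refine le_trans (le_dmax ?_ 0) (le_max_right _ _)
  simp only [Finset.mem_image, Finset.mem_filter]
  exact ⟨x, ⟨hx, h⟩, rfl⟩

include hf hm hmn in
lemma gx_le_n {i : ℕ} : gx F m n i ≤ n := by
  refine max_le (bb_le_n hf hm hmn) (dmax_le ?_ (by omega))
  intro a ha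
  simp only [Finset.mem_image, Finset.mem_filter] at ha
  obtain ⟨x, ⟨hx, _⟩, hcol⟩ := ha
  have := Xgrid hf hx
  omega

include hf in
lemma gx_aa : gx F m n (aa F n) = bb F m n := by
  rw [gx]
  have he : ((XF F).filter fun x => x.1 < aa F n) = ∅ := by
    rw [Finset.filter_eq_empty_iff]
    intro x hx
    have := aa_le_xrow hf hx
    omega
  rw [he]
  simp only [Finset.image_empty]
  rw [dmax_of_empty (by simp)]
  omega

/-! ### the key comparison -/

include hf hm hmn in
lemma keycomp {i0 i1 : ℕ} (h0 : 2 ≤ i0) (h01 : i0 ≤ i1) (h1 : i1 ≤ aa F n) :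
    ss F n (i0 + 1) < ww F n i1 := by
  obtain ⟨wa, hwa, hwar⟩ := aa_attain hf (by omega)
  have hne : (((Y1 F n).filter fun y => i1 ≤ y.1).image Prod.snd).Nonempty :=
    ⟨wa.2, by
      simp only [Finset.mem_image, Finset.mem_filter]
      exact ⟨wa, ⟨hwa, by omega⟩, rfl⟩⟩
  have hmin := dmin_mem hne n
  simp only [Finset.mem_image, Finset.mem_filter] at hmin
  obtain ⟨w', ⟨hw', hw'r⟩, hw'c⟩ := hmin
  have hwwval : ww F n i1 = w'.2 := by rw [ww, hw'c]
  have hw'c2 : 2 ≤ w'.2 := Y1_col2 hf hm hmn hw' (by omega)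
  rw [hwwval]
  refine max_lt (by omega) ?_
  rcases (((Y2 F n).filter fun y => y.1 < i0 + 1).image Prod.snd).eq_empty_or_nonempty
    with he | hne2
  · rw [he, dmax_of_empty (by simp)]; omega
  · have hmax := dmax_mem hne2 0
    simp only [Finset.mem_image, Finset.mem_filter] at hmax
    obtain ⟨z', ⟨hz', hz'r⟩, hz'c⟩ := hmax
    rw [← hz'c]
    -- show z'.2 < w'.2
    rcases (mem_Y1.mp hw').2 with ⟨u, hu, hu1, hu2⟩ | hr1 | hr1
    · -- w' is a top with bottom u
      by_contra hcon
      exact Y2_notTop hf hz' ⟨u, hu, by omega, by omega⟩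
    · omega
    · have := Y2_col_le_bcol hf hz'
      omega

end Params
section Paths

variable {m n : ℕ} {F : Finset V} (hf : IsFace m n F) (hm : 2 ≤ m) (hmn : m ≤ n)

include hf hm in
lemma hbtP : aa F n ≤ m := aa_le_m hf hm

include hf in
lemma hstepP : ∀ i, aa F n ≤ i → i < m → eP F m n i < eP F m n (i+1) := by
  intro i _ _
  have := gx_mono hf (m := m) (F := F) (i := i) (j := i + 1) (by omega)
  simp only [eP]; omega

lemma heiP : ∀ i, aa F n ≤ i → i ≤ eP F m n i := fun i _ => Nat.le_add_right _ _

include hf in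
lemma hbloP : eP F m n (aa F n) ≤ aa F n + bb F m n := by
  rw [eP, gx_aa hf]

include hf hm in
lemma hrloP : rP F m n (aa F n + bb F m n) = aa F n := by
  refine rfun_eq (hbtP hf hm) (hstepP hf) le_rfl (hbtP hf hm) (hbloP hf) ?_
  intro _
  have := gx_ge_bb (F := F) (m := m) (n := n) (i := aa F n + 1)
  rw [eP]; omega

include hf hm hmn in
lemma hrhiP : rP F m n (m + n) = m :=
  rfun_eq (hbtP hf hm) (hstepP hf) (hbtP hf hm) le_rfl
    (by rw [eP]; have := gx_le_n hf hm hmn (i := m); omega) (by omega)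

lemma hbtU : 1 ≤ aa F n := one_le_aa

include hf hm hmn in
lemma hstepU : ∀ i, 1 ≤ i → i < aa F n → eU F n i < eU F n (i+1) := by
  intro i h1 h2
  rcases Nat.eq_or_lt_of_le h1 with h | h
  · have := one_le_ww hf hm hmn (F := F) (i := 2)
    simp only [eU, ← h]
    norm_num
    omega
  · have hmono := ww_mono hf (F := F) (n := n) (i := i) (j := i + 1) (by omega)
    simp only [eU, if_neg (by omega : ¬ i ≤ 1), if_neg (by omega : ¬ i + 1 ≤ 1)]
    omega

lemma heiU : ∀ i, 1 ≤ i → i ≤ eU F n i := fun i _ => Nat.le_add_right _ _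

lemma hbloU : eU F n 1 ≤ 2 := by simp [eU]

include hf hm hmn in
lemma hrloU : rU F n 2 = 1 := by
  refine rfun_eq hbtU (hstepU hf hm hmn) le_rfl hbtU (by simp [eU]) ?_
  intro _
  have := one_le_ww hf hm hmn (F := F) (i := 2)
  show 2 < eU F n 2
  simp only [eU, if_neg (by omega : ¬ (2:ℕ) ≤ 1)]
  omega

include hf hm hmn in
lemma hrhiU : rU F n (aa F n + n) = aa F n := by
  refine rfun_eq hbtU (hstepU hf hm hmn) hbtU le_rfl ?_ (by omega)
  rcases Nat.eq_or_lt_of_le (one_le_aa (F := F) (n := n)) with h | h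
  · rw [← h]; simp only [eU, if_pos (le_refl 1)]; omega
  · have := ww_le_n hf (F := F) (n := n) (i := aa F n)
    simp only [eU, if_neg (by omega : ¬ aa F n ≤ 1)]
    omega

include hm in
lemma hbtV : 2 ≤ m := hm

lemma hstepV : ∀ i, 2 ≤ i → i < m → eV F n i < eV F n (i+1) := by
  intro i _ _
  have := ss_mono (F := F) (n := n) (i := i) (j := i + 1) (by omega)
  simp only [eV]; omega

lemma heiV : ∀ i, 2 ≤ i → i ≤ eV F n i := fun i _ => Nat.le_add_right _ _

include hf in
lemma ss_two : ss F n 2 = 1 := by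
  rw [ss]
  have he : ((Y2 F n).filter fun y => y.1 < 2) = ∅ := by
    rw [Finset.filter_eq_empty_iff]
    intro y hy
    have := Y2_row hf hy
    omega
  rw [he]
  simp only [Finset.image_empty]
  rw [dmax_of_empty (by simp)]
  simp

include hf in
lemma hbloV : eV F n 2 ≤ 3 := by rw [eV, ss_two hf]

include hf hm in
lemma hrloV : rV F m n 3 = 2 := by
  refine rfun_eq hm (hstepV) le_rfl hm (by rw [eV, ss_two hf]) ?_
  intro _
  have := one_le_ss (F := F) (n := n) (i := 3)
  show 3 < eV F n 3
  rw [eV]; omega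

include hf hm in
lemma hrhiV : rV F m n (m + bb F m n) = m := by
  refine rfun_eq hm (hstepV) hm le_rfl ?_ (by omega)
  have := ss_mono (F := F) (n := n) (i := m) (j := m + 1) (by omega)
  rw [eV, bb]
  omega

end Paths
section Cells

variable {m n : ℕ} {F : Finset V} (hf : IsFace m n F) (hm : 2 ≤ m) (hmn : m ≤ n)

include hf hm hmn

/-- bounds for cells of the x-path. -/
lemma Pc_bounds {c : ℕ × ℕ} (hc : c ∈ Pcells F m n) :
    aa F n ≤ c.1 ∧ c.1 ≤ m ∧ bb F m n ≤ c.2 ∧ c.2 ≤ n := by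
  obtain ⟨h1, h2, h3, h4, h5, h6⟩ := pc_diag (hbtP hf hm) (hstepP hf) heiP (hbloP hf) hc
  have hlb := pc_col_lb (hbtP hf hm) (hstepP hf) heiP (hbloP hf) (hrloP hf hm) hc
  have hub := pc_col_ub (hbtP hf hm) (hstepP hf) heiP (hbloP hf) (hrhiP hf hm hmn) hc
  have hab : aa F n + bb F m n - aa F n = bb F m n := by omega
  have hmn' : m + n - m = n := by omega
  rw [hab] at hlb
  rw [hmn'] at hub
  exact ⟨h4, h5, hlb, hub⟩

lemma Uc_bounds {c : ℕ × ℕ} (hc : c ∈ Ucells F m n) :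
    1 ≤ c.1 ∧ c.1 ≤ aa F n ∧ 1 ≤ c.2 ∧ c.2 ≤ n := by
  obtain ⟨h1, h2, h3, h4, h5, h6⟩ := pc_diag hbtU (hstepU hf hm hmn) heiU hbloU hc
  have hlb := pc_col_lb hbtU (hstepU hf hm hmn) heiU hbloU (hrloU hf hm hmn) hc
  have hub := pc_col_ub hbtU (hstepU hf hm hmn) heiU hbloU (hrhiU hf hm hmn) hc
  have e1 : (2:ℕ) - 1 = 1 := rfl
  have e2 : aa F n + n - aa F n = n := by omega
  rw [e1] at hlb
  rw [e2] at hub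
  exact ⟨h4, h5, hlb, hub⟩

lemma Vc_bounds {c : ℕ × ℕ} (hc : c ∈ Vcells F m n) :
    2 ≤ c.1 ∧ c.1 ≤ m ∧ 1 ≤ c.2 ∧ c.2 ≤ bb F m n := by
  obtain ⟨h1, h2, h3, h4, h5, h6⟩ := pc_diag hm hstepV heiV (hbloV hf) hc
  have hlb := pc_col_lb hm hstepV heiV (hbloV hf) (hrloV hf hm) hc
  have hub := pc_col_ub hm hstepV heiV (hbloV hf) (hrhiV hf hm) hc
  have e1 : (3:ℕ) - 2 = 1 := rfl
  have e2 : m + bb F m n - m = bb F m n := by omega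
  rw [e1] at hlb
  rw [e2] at hub
  exact ⟨h4, h5, hlb, hub⟩

lemma Pc_PP {c c' : ℕ × ℕ} (hc : c ∈ Pcells F m n) (hc' : c' ∈ Pcells F m n)
    (h : c.1 < c'.1) : c.2 ≤ c'.2 :=
  pc_PP (hbtP hf hm) (hstepP hf) heiP (hbloP hf) hc hc' h

lemma Uc_PP {c c' : ℕ × ℕ} (hc : c ∈ Ucells F m n) (hc' : c' ∈ Ucells F m n)
    (h : c.1 < c'.1) : c.2 ≤ c'.2 :=
  pc_PP hbtU (hstepU hf hm hmn) heiU hbloU hc hc' h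

lemma Vc_PP {c c' : ℕ × ℕ} (hc : c ∈ Vcells F m n) (hc' : c' ∈ Vcells F m n)
    (h : c.1 < c'.1) : c.2 ≤ c'.2 :=
  pc_PP hm hstepV heiV (hbloV hf) hc hc' h

/-- a Q2-cell's column is at most `ss (row+1)`. -/
lemma Vc_col_le {c : ℕ × ℕ} (hc : c ∈ Vcells F m n) : c.2 ≤ ss F n (c.1 + 1) := by
  obtain ⟨hr2, hrm, hc1, hcb⟩ := Vc_bounds hf hm hmn hc
  rcases Nat.eq_or_lt_of_le hrm with h | h
  · rw [h, ← bb]; exact hcb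
  · have := pc_next hm hstepV heiV (hbloV hf) hc h
    rw [eV] at this
    omega

/-- a Q1-cell in row ≥ 2 has column at least `ww row`. -/
lemma Uc_col_ge {c : ℕ × ℕ} (hc : c ∈ Ucells F m n) (h2 : 2 ≤ c.1) : ww F n c.1 ≤ c.2 := by
  obtain ⟨h1, h2', h3, h4, h5, h6⟩ := pc_diag hbtU (hstepU hf hm hmn) heiU hbloU hc
  rw [eU, if_neg (by omega : ¬ c.1 ≤ 1)] at h6
  omega

/-- the crossing property: any Q2-cell weakly above a Q1-cell is strictly to its left. -/
lemma XPcross {z w : ℕ × ℕ} (hz : z ∈ Vcells F m n) (hw : w ∈ Ucells F m n)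
    (hrow : z.1 ≤ w.1) : z.2 < w.2 := by
  obtain ⟨hz2, hzm, hz1, hzb⟩ := Vc_bounds hf hm hmn hz
  obtain ⟨hw1, hwa, hwc1, hwcn⟩ := Uc_bounds hf hm hmn hw
  have h1 : z.2 ≤ ss F n (z.1 + 1) := Vc_col_le hf hm hmn hz
  have h2 : ww F n w.1 ≤ w.2 := Uc_col_ge hf hm hmn hw (by omega)
  have h3 : ss F n (z.1 + 1) < ww F n w.1 := keycomp hf hm hmn hz2 hrow hwa
  omega

end Cells
section Assemble

variable {m n : ℕ} {F : Finset V} (hf : IsFace m n F) (hm : 2 ≤ m) (hmn : m ≤ n)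

include hf hm hmn

lemma x_mem_Pc {x : ℕ × ℕ} (hx : x ∈ XF F) : x ∈ Pcells F m n := by
  obtain ⟨hg1, hg2, hg3, hg4⟩ := Xgrid hf hx
  have hbx := bb_le_xcol hf hx
  have hax := aa_le_xrow hf hx
  have h3 : eP F m n x.1 ≤ x.1 + x.2 := by
    rw [eP]
    have : gx F m n x.1 ≤ x.2 := by
      refine gx_le hf hbx ?_
      intro x' hx' hrow
      by_contra hcon
      exact fA hf hx' hx hrow (by omega)
    omega
  have h4 : x.1 < m → x.1 + x.2 < eP F m n (x.1 + 1) := by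
    intro _
    have := le_gx (m := m) (n := n) hx (i := x.1 + 1) (by omega)
    rw [eP]; omega
  have := pc_mem (hbtP hf hm) (hstepP hf) heiP (hbloP hf) hax hg2 h3 h4
    (by omega : aa F n + bb F m n ≤ x.1 + x.2) (by omega : x.1 + x.2 ≤ m + n)
  rw [Prod.mk.eta] at this
  exact this

lemma y1_mem_Uc {y : ℕ × ℕ} (hy : y ∈ Y1 F n) : y ∈ Ucells F m n := by
  obtain ⟨hg1, hg2, hg3, hg4⟩ := Ygrid hf (Y1_mem_YF hy)
  have hya := Y1_row_le_aa hf hy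
  have h3 : eU F n y.1 ≤ y.1 + y.2 := by
    rcases le_or_gt y.1 1 with h | h
    · rw [eU, if_pos h]; omega
    · rw [eU, if_neg (by omega)]
      have := ww_le hy (le_refl y.1) (n := n)
      omega
  have h4 : y.1 < aa F n → y.1 + y.2 < eU F n (y.1 + 1) := by
    intro _
    rw [eU, if_neg (by omega : ¬ y.1 + 1 ≤ 1)]
    have : y.2 ≤ ww F n (y.1 + 1) := by
      refine le_ww ?_ hg4
      intro w' hw' hrow
      exact Y1_nodesc hf hm hmn hy hw' (by omega)
    omega
  have := pc_mem hbtU (hstepU hf hm hmn) heiU hbloU hg1 hya h3 h4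
    (by omega : 2 ≤ y.1 + y.2) (by omega : y.1 + y.2 ≤ aa F n + n)
  rw [Prod.mk.eta] at this
  exact this

lemma y2_mem_Vc {y : ℕ × ℕ} (hy : y ∈ Y2 F n) : y ∈ Vcells F m n := by
  obtain ⟨hg1, hg2, hg3, hg4⟩ := Ygrid hf (Y2_mem_YF hf hy)
  have hr2 := Y2_row hf hy
  have hcb := col_le_bb hf hy
  have h3 : eV F n y.1 ≤ y.1 + y.2 := by
    rw [eV]
    have := ss_le_col hf hy
    omega
  have h4 : y.1 < m → y.1 + y.2 < eV F n (y.1 + 1) := by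
    intro _
    rw [eV]
    have := col_le_ss hy (i := y.1 + 1) (by omega)
    omega
  have := pc_mem hm hstepV heiV (hbloV hf) hr2 hg2 h3 h4
    (by omega : 3 ≤ y.1 + y.2) (by omega : y.1 + y.2 ≤ m + bb F m n)
  rw [Prod.mk.eta] at this
  exact this

omit hf hm hmn in
lemma mem_GG_true {c : ℕ × ℕ} : (true, c) ∈ GG F m n ↔ c ∈ Pcells F m n := by
  simp [GG]

omit hf hm hmn in
lemma mem_GG_false {c : ℕ × ℕ} :
    (false, c) ∈ GG F m n ↔ (c ∈ Ucells F m n ∨ c ∈ Vcells F m n) := by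
  simp [GG]

lemma subset_GG : F ⊆ GG F m n := by
  intro v hv
  obtain ⟨b, p⟩ := v
  cases b
  · -- y vertex
    have hp : p ∈ YF F := by obtain ⟨i, j⟩ := p; exact mem_YF.mpr hv
    rw [mem_GG_false]
    by_cases h1 : p ∈ Y1 F n
    · exact Or.inl (y1_mem_Uc hf hm hmn h1)
    · exact Or.inr (y2_mem_Vc hf hm hmn (by rw [Y2, Finset.mem_sdiff]; exact ⟨hp, h1⟩))
  · have hp : p ∈ XF F := by obtain ⟨i, j⟩ := p; exact mem_XF.mpr hv
    rw [mem_GG_true]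
    exact x_mem_Pc hf hm hmn hp

lemma face_GG : IsFace m n (GG F m n) := by
  have haam := aa_le_m hf hm
  have hbbn := bb_le_n hf hm hmn
  have haa1 := one_le_aa (F := F) (n := n)
  have hbb1 := one_le_bb (F := F) (m := m) (n := n)
  refine ⟨?_, ?_, ?_, ?_, ?_, ?_⟩
  · -- InGrid
    rintro ⟨b, i, j⟩ hv
    cases b
    · rw [mem_GG_false] at hv
      rcases hv with h | h
      · have h' := Uc_bounds hf hm hmn h
        simp only at h'
        exact ⟨(by omega : 1 ≤ i), (by omega : i ≤ m), (by omega : 1 ≤ j), (by omega : j ≤ n)⟩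
      · have h' := Vc_bounds hf hm hmn h
        simp only at h'
        exact ⟨(by omega : 1 ≤ i), (by omega : i ≤ m), (by omega : 1 ≤ j), (by omega : j ≤ n)⟩
    · rw [mem_GG_true] at hv
      have h' := Pc_bounds hf hm hmn hv
      simp only at h'
      exact ⟨(by omega : 1 ≤ i), (by omega : i ≤ m), (by omega : 1 ≤ j), (by omega : j ≤ n)⟩
  · -- A
    rintro i j k l hij hkl ⟨h1, h2⟩
    rw [mem_GG_true] at h1 h2
    have := Pc_PP hf hm hmn h1 h2 (by exact hij)
    simp only at this
    omega
  · -- B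
    rintro i j k l hij hkl ⟨h1, h2⟩
    rw [mem_GG_true] at h1
    rw [mem_GG_false] at h2
    have hP := Pc_bounds hf hm hmn h1
    rcases h2 with h2 | h2
    · have := Uc_bounds hf hm hmn h2
      simp only at this hP
      omega
    · have := Vc_bounds hf hm hmn h2
      simp only at this hP
      omega
  · -- C
    rintro i j k p q r hij hjk hpq hqr ⟨h1, h2, h3⟩
    rw [mem_GG_true] at h1
    rw [mem_GG_false] at h2 h3
    have hP := Pc_bounds hf hm hmn h1
    rcases h2 with h2 | h2
    · rcases h3 with h3 | h3
      · have := Uc_PP hf hm hmn h3 h2 (by exact hij)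
        simp only at this
        omega
      · have := XPcross hf hm hmn h3 h2 (by simp only; omega)
        simp only at this
        omega
    · have := Vc_bounds hf hm hmn h2
      simp only at this hP
      omega
  · -- D
    rintro i j k p q r hij hjk hpq hqr ⟨h1, h2, h3⟩
    rw [mem_GG_true] at h1
    rw [mem_GG_false] at h2 h3
    have hP := Pc_bounds hf hm hmn h1
    have hq : (j, q) ∈ Vcells F m n := by
      rcases h2 with h2 | h2
      · have := Uc_bounds hf hm hmn h2
        simp only at this hP
        omega
      · exact h2
    have hp : (k, p) ∈ Vcells F m n := by
      rcases h3 with h3 | h3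
      · have := Uc_bounds hf hm hmn h3
        simp only at this hP
        omega
      · exact h3
    have := Vc_PP hf hm hmn hq hp (by exact hjk)
    simp only at this
    omega
  · -- E
    rintro i j k p q r hij hjk hpq hqr ⟨h1, h2, h3⟩
    rw [mem_GG_false] at h1 h2 h3
    rcases h2 with h2 | h2
    · rcases h1 with h1 | h1
      · have := Uc_PP hf hm hmn h1 h2 (by exact hij)
        simp only at this
        omega
      · have := XPcross hf hm hmn h1 h2 (by simp only; omega)
        simp only at this
        omega
    · rcases h3 with h3 | h3
      · have := XPcross hf hm hmn h2 h3 (by simp only; omega)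
        simp only at this
        omega
      · have := Vc_PP hf hm hmn h2 h3 (by exact hjk)
        simp only at this
        omega

lemma card_GG : (GG F m n).card = 2 * (m + n) - 2 := by
  have haam := aa_le_m hf hm
  have hbbn := bb_le_n hf hm hmn
  have haa1 := one_le_aa (F := F) (n := n)
  have hbb1 := one_le_bb (F := F) (m := m) (n := n)
  have cP : (Pcells F m n).card = (m + n) + 1 - (aa F n + bb F m n) :=
    pc_card (hbtP hf hm) (hstepP hf) heiP (hbloP hf) (by omega)
  have cU : (Ucells F m n).card = (aa F n + n) + 1 - 2 :=
    pc_card hbtU (hstepU hf hm hmn) heiU hbloU (by omega)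
  have cV : (Vcells F m n).card = (m + bb F m n) + 1 - 3 :=
    pc_card hm hstepV heiV (hbloV hf) (by omega)
  have hdisj : Disjoint (Ucells F m n) (Vcells F m n) := by
    rw [Finset.disjoint_right]
    intro c hcV hcU
    have := XPcross hf hm hmn hcV hcU le_rfl
    omega
  have cUV : ((Ucells F m n) ∪ (Vcells F m n)).card
      = (Ucells F m n).card + (Vcells F m n).card := Finset.card_union_of_disjoint hdisj
  have hdisj2 : Disjoint ((Pcells F m n).image fun c => ((true, c) : V))
      (((Ucells F m n) ∪ (Vcells F m n)).image fun c => ((false, c) : V)) := by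
    rw [Finset.disjoint_left]
    rintro ⟨b, p⟩ h1 h2
    simp only [Finset.mem_image] at h1 h2
    obtain ⟨c1, -, hc1⟩ := h1
    obtain ⟨c2, -, hc2⟩ := h2
    rw [← hc2] at hc1
    simp at hc1
  have inj1 : Function.Injective (fun c : ℕ × ℕ => ((true, c) : V)) := by
    intro a b h; simpa using h
  have inj2 : Function.Injective (fun c : ℕ × ℕ => ((false, c) : V)) := by
    intro a b h; simpa using h
  rw [GG, Finset.card_union_of_disjoint hdisj2, Finset.card_image_of_injective _ inj1,
    Finset.card_image_of_injective _ inj2, cUV, cP, cU, cV]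
  omega

end Assemble

end PurityProof

theorem complex_is_pure (m n : ℕ) (hm : 2 ≤ m) (hmn : m ≤ n) (F : Finset V)
    (hF : IsFacet m n F) : F.card = 2 * (m + n) - 2 := by
  obtain ⟨hface, hmax⟩ := hF
  have h1 := PurityProof.face_GG hface hm hmn
  have h2 := PurityProof.subset_GG hface hm hmn
  have h3 := hmax _ h1 h2
  rw [h3]
  exact PurityProof.card_GG hface hm hmn
end
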